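/- arXiv:2403.09992 — 6 statements merged into one kernel-verified Lean document; each statement's English description precedes it below -/
import Mathlib

section
/- Let G be a countable group, let μ be a probability measure on G, and let η : G → ℝ be a signed measure with ∑_{g∈G} |η(g)| < ∞ that is balanced (∑_{g∈G} η(g) = 0) and absolutely continuous with respect to μ (η(g) = 0 whenever μ(g) = 0). Then lim_{k→∞} (1/k) · ‖∑_{i=1}^{k} μ^{*(i−1)} * η * μ^{*(k−i)}‖₀ = 0, i.e. (1/k) ∑_{g∈G} |∑_{i=1}^{k}(μ^{*(i−1)} * η * μ^{*(k−i)})(g)| → 0 as k → ∞. -/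
/-!
Write the perturbation as `f * μ`. When `f ^ 2 * μ` is summable and `f * μ` has mass zero, think of
i.i.d. steps `X₁, X₂, …` of law `μ` and `M_k = f X₁ + ⋯ + f X_k`: the Cesàro sum is
`g ↦ E[M_k; X₁ ⋯ X_k = g]`, so its ℓ¹-norm is at most `E|M_k| ≤ √(E[M_k²]) = √k ‖f‖_{L²(μ)} = o(k)`.
Without probability theory, `2λ E|M_k| ≤ λ² + E[M_k²]` follows from the nonnegativity, for every
`g`, of the quadratic `t ↦ E[(t + M_k)²; X₁ ⋯ X_k = g]`, whose three coefficients satisfy recursions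
in `k`. A general balanced `η ≪ μ` is an ℓ¹-limit of such `f * μ` (truncate `η / μ` to a finite set
and recentre), and the Cesàro sum is `k`-Lipschitz in `η` for the ℓ¹-norm.
-/

open Filter Topology Pointwise

/-- `μ` is a probability measure on the countable group `G`. -/
def IsProbMeasure {G : Type*} (μ : G → ℝ) : Prop :=
  (∀ g, 0 ≤ μ g) ∧ Summable μ ∧ ∑' g, μ g = 1

/-- Convolution of two (signed) measures on `G`. -/
noncomputable def conv {G : Type*} [Group G] (μ ν : G → ℝ) : G → ℝ :=
  fun g => ∑' h : G, μ h * ν (h⁻¹ * g)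

/-- `n`-fold convolution power of `μ`, with `convPow μ 0` the point mass at the identity. -/
noncomputable def convPow {G : Type*} [Group G] (μ : G → ℝ) : ℕ → G → ℝ
  | 0 => ({1} : Set G).indicator fun _ => (1 : ℝ)
  | n + 1 => conv μ (convPow μ n)

section Convolution

@[simps]
def convKernelEquiv (G : Type*) [Group G] : G × G ≃ G × G where
  toFun q := (q.1 * q.2, q.1)
  invFun p := (p.2, p.2⁻¹ * p.1)
  left_inv q := by simp
  right_inv p := by simp

variable {G : Type*} [Group G] {a b c : G → ℝ}

theorem summable_conv_kernel (ha : Summable a) (hb : Summable b) :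
    Summable fun p : G × G => a p.2 * b (p.2⁻¹ * p.1) := by
  have hprod : Summable fun q : G × G => a q.1 * b q.2 :=
    summable_mul_of_summable_norm (by simpa using ha.abs) (by simpa using hb.abs)
  exact (convKernelEquiv G).summable_iff.1 (hprod.congr fun q => by simp)

theorem hasSum_conv (ha : Summable a) (hb : Summable b) (g : G) :
    HasSum (fun h => a h * b (h⁻¹ * g)) (conv a b g) :=
  ((summable_conv_kernel ha hb).prod_factor g).hasSum

theorem summable_conv (ha : Summable a) (hb : Summable b) : Summable (conv a b) :=
  (summable_conv_kernel ha hb).prod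

theorem tsum_conv (ha : Summable a) (hb : Summable b) :
    ∑' g, conv a b g = (∑' g, a g) * ∑' g, b g := by
  calc ∑' g, conv a b g = ∑' p : G × G, a p.2 * b (p.2⁻¹ * p.1) :=
        (summable_conv_kernel ha hb).tsum_prod.symm
    _ = ∑' q : G × G, a q.1 * b q.2 := by
        rw [← (convKernelEquiv G).tsum_eq]
        simp
    _ = (∑' g, a g) * ∑' g, b g :=
        (tsum_mul_tsum_of_summable_norm (by simpa using ha.abs) (by simpa using hb.abs)).symm

theorem abs_conv_le (ha : Summable a) (hb : Summable b) (g : G) :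
    |conv a b g| ≤ conv (fun x => |a x|) (fun x => |b x|) g := by
  simpa [conv, abs_mul] using norm_tsum_le_tsum_norm (f := fun h => a h * b (h⁻¹ * g))
    (by simpa [abs_mul] using (hasSum_conv ha.abs hb.abs g).summable)

theorem tsum_abs_conv_le (ha : Summable a) (hb : Summable b) :
    ∑' g, |conv a b g| ≤ (∑' g, |a g|) * ∑' g, |b g| :=
  tsum_conv ha.abs hb.abs ▸
    (summable_conv ha hb).abs.tsum_le_tsum (abs_conv_le ha hb) (summable_conv ha.abs hb.abs)

theorem conv_sub_left (ha : Summable a) (hb : Summable b) (hc : Summable c) :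
    conv (a - b) c = conv a c - conv b c := by
  funext g
  rw [Pi.sub_apply, ← ((hasSum_conv ha hc g).sub (hasSum_conv hb hc g)).tsum_eq]
  simp only [conv, Pi.sub_apply, sub_mul]

theorem conv_sub_right (ha : Summable a) (hb : Summable b) (hc : Summable c) :
    conv a (b - c) = conv a b - conv a c := by
  funext g
  rw [Pi.sub_apply, ← ((hasSum_conv ha hb g).sub (hasSum_conv ha hc g)).tsum_eq]
  simp only [conv, Pi.sub_apply, mul_sub]

theorem conv_finset_sum_right {ι : Type*} (s : Finset ι) {b : ι → G → ℝ} (ha : Summable a)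
    (hb : ∀ i ∈ s, Summable (b i)) :
    conv a (∑ i ∈ s, b i) = ∑ i ∈ s, conv a (b i) := by
  funext g
  rw [Finset.sum_apply, ← (hasSum_sum fun i hi => hasSum_conv ha (hb i hi) g).tsum_eq]
  simp only [conv, Finset.sum_apply, Finset.mul_sum]

theorem conv_assoc (ha : Summable a) (hb : Summable b) (hc : Summable c) :
    conv (conv a b) c = conv a (conv b c) := by
  funext g
  have hc_le (x : G) : |c x| ≤ ∑' y, |c y| := hc.abs.le_tsum x fun _ _ => abs_nonneg _
  have hF : Summable fun p : G × G => a p.1 * b (p.1⁻¹ * p.2) * c (p.2⁻¹ * g) :=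
    .of_norm_bounded ((summable_conv_kernel ha hb).prod_symm.abs.mul_right _) fun p => by
      rw [Real.norm_eq_abs, abs_mul]
      exact mul_le_mul_of_nonneg_left (hc_le _) (abs_nonneg _)
  have hinner : ∀ m : G, ∑' h, a m * b (m⁻¹ * h) * c (h⁻¹ * g) = a m * conv b c (m⁻¹ * g) := by
    intro m
    rw [conv, ← tsum_mul_left, ← (Equiv.mulLeft m).tsum_eq]
    simp [mul_assoc]
  calc conv (conv a b) c g = ∑' h, ∑' m, a m * b (m⁻¹ * h) * c (h⁻¹ * g) := by
        simp only [conv, ← tsum_mul_right]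
    _ = ∑' m, ∑' h, a m * b (m⁻¹ * h) * c (h⁻¹ * g) := hF.tsum_comm
    _ = conv a (conv b c) g := tsum_congr hinner

end Convolution

theorem IsProbMeasure.tsum_abs {G : Type*} {μ : G → ℝ} (hμ : IsProbMeasure μ) :
    ∑' g, |μ g| = 1 := by
  simpa [abs_of_nonneg (hμ.1 _)] using hμ.2.2

section ConvPow

variable {G : Type*} [Group G] {μ η η' : G → ℝ}

theorem conv_convPow_zero (μ b : G → ℝ) : conv (convPow μ 0) b = b := by
  funext g
  rw [conv, tsum_eq_single 1 fun h hh => by simp [convPow, hh]]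
  simp [convPow]

theorem summable_convPow (hμ : Summable μ) : ∀ k, Summable (convPow μ k)
  | 0 => summable_of_ne_finset_zero (s := {1}) fun g hg => by simp_all [convPow]
  | k + 1 => summable_conv hμ (summable_convPow hμ k)

theorem isProbMeasure_conv {a b : G → ℝ} (ha : IsProbMeasure a) (hb : IsProbMeasure b) :
    IsProbMeasure (conv a b) :=
  ⟨fun _ => tsum_nonneg fun h => mul_nonneg (ha.1 h) (hb.1 _), summable_conv ha.2.1 hb.2.1, by
    rw [tsum_conv ha.2.1 hb.2.1, ha.2.2, hb.2.2, one_mul]⟩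

theorem isProbMeasure_convPow (hμ : IsProbMeasure μ) : ∀ k, IsProbMeasure (convPow μ k)
  | 0 => ⟨Set.indicator_nonneg fun _ _ => zero_le_one, summable_convPow hμ.2.1 0, by
      rw [tsum_eq_single 1 fun h hh => by simp [convPow, hh]]
      simp [convPow]⟩
  | k + 1 => isProbMeasure_conv hμ (isProbMeasure_convPow hμ k)

-- the derivative of `t ↦ (μ + t • η)^{*k}` at `t = 0`
noncomputable def convPowDeriv (μ η : G → ℝ) (k : ℕ) : G → ℝ :=
  fun g => ∑ i ∈ Finset.range k, conv (convPow μ i) (conv η (convPow μ (k - 1 - i))) g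

theorem summable_convPowDeriv (hμ : Summable μ) (hη : Summable η) (k : ℕ) :
    Summable (convPowDeriv μ η k) :=
  summable_sum fun i _ =>
    summable_conv (summable_convPow hμ i) (summable_conv hη (summable_convPow hμ _))

theorem convPowDeriv_succ (hμ : Summable μ) (hη : Summable η) (k : ℕ) :
    convPowDeriv μ η (k + 1) = conv η (convPow μ k) + conv μ (convPowDeriv μ η k) := by
  have hsum : convPowDeriv μ η k =
      ∑ i ∈ Finset.range k, conv (convPow μ i) (conv η (convPow μ (k - 1 - i))) := by
    funext g
    simp [convPowDeriv]
  rw [hsum, conv_finset_sum_right _ hμ fun i _ =>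
    summable_conv (summable_convPow hμ i) (summable_conv hη (summable_convPow hμ _))]
  funext g
  simp only [convPowDeriv, Finset.sum_range_succ', Pi.add_apply, Finset.sum_apply]
  rw [add_comm]
  congr 1
  · simp [conv_convPow_zero]
  · refine Finset.sum_congr rfl fun i _ => ?_
    rw [show k + 1 - 1 - (i + 1) = k - 1 - i by omega]
    exact congrFun (conv_assoc hμ (summable_convPow hμ i)
      (summable_conv hη (summable_convPow hμ _))) g

theorem convPowDeriv_sub (hμ : Summable μ) (hη : Summable η) (hη' : Summable η') (k : ℕ) :
    convPowDeriv μ (η - η') k = convPowDeriv μ η k - convPowDeriv μ η' k := by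
  funext g
  simp only [convPowDeriv, Pi.sub_apply, ← Finset.sum_sub_distrib]
  refine Finset.sum_congr rfl fun i _ => ?_
  rw [conv_sub_left hη hη' (summable_convPow hμ _), conv_sub_right (summable_convPow hμ i)
    (summable_conv hη (summable_convPow hμ _)) (summable_conv hη' (summable_convPow hμ _))]
  rfl

theorem tsum_abs_convPowDeriv_le (hμ : IsProbMeasure μ) (hη : Summable η) (k : ℕ) :
    ∑' g, |convPowDeriv μ η k g| ≤ k * ∑' g, |η g| := by
  have hρ := isProbMeasure_convPow hμ
  have hterm (i j : ℕ) : ∑' g, |conv (convPow μ i) (conv η (convPow μ j)) g| ≤ ∑' g, |η g| :=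
    calc _ ≤ (∑' g, |convPow μ i g|) * ∑' g, |conv η (convPow μ j) g| :=
          tsum_abs_conv_le (hρ i).2.1 (summable_conv hη (hρ j).2.1)
      _ ≤ 1 * ((∑' g, |η g|) * 1) := by
          rw [(hρ i).tsum_abs, ← (hρ j).tsum_abs]
          gcongr
          exact tsum_abs_conv_le hη (hρ j).2.1
      _ = ∑' g, |η g| := by ring
  have hsummable (i : ℕ) :
      Summable fun g => |conv (convPow μ i) (conv η (convPow μ (k - 1 - i))) g| :=
    (summable_conv (hρ i).2.1 (summable_conv hη (hρ _).2.1)).abs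
  calc ∑' g, |convPowDeriv μ η k g|
      ≤ ∑' g, ∑ i ∈ Finset.range k, |conv (convPow μ i) (conv η (convPow μ (k - 1 - i))) g| :=
        (summable_convPowDeriv hμ.2.1 hη k).abs.tsum_le_tsum
          (fun g => Finset.abs_sum_le_sum_abs _ _) (summable_sum fun i _ => hsummable i)
    _ = ∑ i ∈ Finset.range k, ∑' g, |conv (convPow μ i) (conv η (convPow μ (k - 1 - i))) g| :=
        Summable.tsum_finsetSum fun i _ => hsummable i
    _ ≤ ∑ _i ∈ Finset.range k, ∑' g, |η g| := Finset.sum_le_sum fun i _ => hterm i _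
    _ = k * ∑' g, |η g| := by simp

theorem tsum_abs_convPowDeriv_le_add (hμ : IsProbMeasure μ) (hη : Summable η)
    (hη' : Summable η') (k : ℕ) :
    ∑' g, |convPowDeriv μ η k g| ≤ k * ∑' g, |η g - η' g| + ∑' g, |convPowDeriv μ η' k g| := by
  have hd : Summable (η - η') := hη.sub hη'
  have hsplit : convPowDeriv μ η k = convPowDeriv μ (η - η') k + convPowDeriv μ η' k := by
    rw [convPowDeriv_sub hμ.2.1 hη hη', sub_add_cancel]
  calc ∑' g, |convPowDeriv μ η k g|
      ≤ ∑' g, (|convPowDeriv μ (η - η') k g| + |convPowDeriv μ η' k g|) := by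
        refine (summable_convPowDeriv hμ.2.1 hη k).abs.tsum_le_tsum (fun g => ?_)
          ((summable_convPowDeriv hμ.2.1 hd k).abs.add
            (summable_convPowDeriv hμ.2.1 hη' k).abs)
        rw [hsplit]
        exact abs_add_le _ _
    _ ≤ k * ∑' g, |η g - η' g| + ∑' g, |convPowDeriv μ η' k g| := by
        rw [Summable.tsum_add (summable_convPowDeriv hμ.2.1 hd k).abs
          (summable_convPowDeriv hμ.2.1 hη' k).abs]
        gcongr
        exact tsum_abs_convPowDeriv_le hμ hd k

end ConvPow

theorem two_mul_mul_abs_le_of_forall_quadratic_nonneg {a b c : ℝ}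
    (h : ∀ t : ℝ, 0 ≤ t ^ 2 * a + 2 * t * b + c) (l : ℝ) : 2 * l * |b| ≤ l ^ 2 * a + c := by
  rcases abs_cases b with ⟨hb, _⟩ | ⟨hb, _⟩ <;> rw [hb]
  · nlinarith [h (-l)]
  · nlinarith [h l]

theorem summable_mul_of_summable_sq_mul {G : Type*} {μ f : G → ℝ} (hμ0 : ∀ g, 0 ≤ μ g)
    (hμ : Summable μ) (hf2 : Summable (f ^ 2 * μ)) : Summable (f * μ) :=
  .of_norm_bounded (hf2.add hμ) fun g => by
    have hfg : |f g| ≤ f g ^ 2 + 1 := by nlinarith [sq_abs (f g), sq_nonneg (|f g| - 1)]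
    simp only [Real.norm_eq_abs, Pi.mul_apply, Pi.pow_apply, abs_mul,
      abs_of_nonneg (hμ0 g)]
    nlinarith [mul_le_mul_of_nonneg_right hfg (hμ0 g)]

section SecondMoment

variable {G : Type*} [Group G] {μ f : G → ℝ}

/- For i.i.d. `X₁, X₂, …` of law `μ`, `Z_k = X₁ ⋯ X_k` and `M_k = f X₁ + ⋯ + f X_k`, the values at
`g` of `convPow μ k`, `convPowDeriv μ (f * μ) k` and `convPowSqMoment μ f k` are `P(Z_k = g)`,
`E[M_k; Z_k = g]` and `E[M_k²; Z_k = g]`; the recursion conditions on `X₁`. -/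
noncomputable def convPowSqMoment (μ f : G → ℝ) : ℕ → G → ℝ
  | 0 => 0
  | k + 1 => fun g => conv (f ^ 2 * μ) (convPow μ k) g
      + 2 * conv (f * μ) (convPowDeriv μ (f * μ) k) g + conv μ (convPowSqMoment μ f k) g

theorem summable_convPowSqMoment (hμ : Summable μ) (hf : Summable (f * μ))
    (hf2 : Summable (f ^ 2 * μ)) : ∀ k, Summable (convPowSqMoment μ f k)
  | 0 => summable_zero
  | k + 1 => ((summable_conv hf2 (summable_convPow hμ k)).add
      ((summable_conv hf (summable_convPowDeriv hμ hf k)).mul_left 2)).add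
      (summable_conv hμ (summable_convPowSqMoment hμ hf hf2 k))

theorem tsum_convPowSqMoment (hμ : IsProbMeasure μ) (hf : Summable (f * μ))
    (hf2 : Summable (f ^ 2 * μ)) (hmean : ∑' g, (f * μ) g = 0) :
    ∀ k : ℕ, ∑' g, convPowSqMoment μ f k g = k * ∑' g, (f ^ 2 * μ) g
  | 0 => by simp [convPowSqMoment]
  | k + 1 => by
    have hρ := summable_convPow hμ.2.1 k
    have hS := summable_convPowDeriv hμ.2.1 hf k
    rw [convPowSqMoment, Summable.tsum_add ((summable_conv hf2 hρ).add
        ((summable_conv hf hS).mul_left 2)) (summable_conv hμ.2.1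
        (summable_convPowSqMoment hμ.2.1 hf hf2 k)),
      Summable.tsum_add (summable_conv hf2 hρ) ((summable_conv hf hS).mul_left 2),
      tsum_mul_left, tsum_conv hf2 hρ, tsum_conv hf hS, tsum_conv hμ.2.1
        (summable_convPowSqMoment hμ.2.1 hf hf2 k),
      (isProbMeasure_convPow hμ k).2.2, hmean, hμ.2.2, tsum_convPowSqMoment hμ hf hf2 hmean k]
    push_cast
    ring

-- `t ^ 2 * P(Z_k = g) + 2 * t * E[M_k; Z_k = g] + E[M_k²; Z_k = g] = E[(t + M_k)²; Z_k = g]`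
theorem convPowSqMoment_quadratic_nonneg (hμ0 : ∀ g, 0 ≤ μ g) (hμ : Summable μ)
    (hf : Summable (f * μ)) (hf2 : Summable (f ^ 2 * μ)) (k : ℕ) (t : ℝ) (g : G) :
    0 ≤ t ^ 2 * convPow μ k g + 2 * t * convPowDeriv μ (f * μ) k g + convPowSqMoment μ f k g := by
  induction k generalizing t g with
  | zero =>
    simp only [convPowDeriv, convPowSqMoment, Finset.range_zero, Finset.sum_empty, Pi.zero_apply,
      mul_zero, add_zero]
    exact mul_nonneg (sq_nonneg t) (Set.indicator_nonneg (fun _ _ => zero_le_one) g)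
  | succ k ih =>
    have hρ := summable_convPow hμ k
    have hS := summable_convPowDeriv hμ hf k
    have hQ := summable_convPowSqMoment hμ hf hf2 k
    have hcond := (((hasSum_conv hμ hρ g).mul_left (t ^ 2)).add
      (((hasSum_conv hf hρ g).add (hasSum_conv hμ hS g)).mul_left (2 * t))).add
      (((hasSum_conv hf2 hρ g).add ((hasSum_conv hf hS g).mul_left 2)).add (hasSum_conv hμ hQ g))
    rw [← Pi.add_apply (conv (f * μ) (convPow μ k)), ← convPowDeriv_succ hμ hf k] at hcond
    have hsplit : ∀ h, μ h * ((t + f h) ^ 2 * convPow μ k (h⁻¹ * g)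
        + 2 * (t + f h) * convPowDeriv μ (f * μ) k (h⁻¹ * g) + convPowSqMoment μ f k (h⁻¹ * g))
        = t ^ 2 * (μ h * convPow μ k (h⁻¹ * g)) + 2 * t * ((f * μ) h * convPow μ k (h⁻¹ * g)
          + μ h * convPowDeriv μ (f * μ) k (h⁻¹ * g)) + ((f ^ 2 * μ) h * convPow μ k (h⁻¹ * g)
          + 2 * ((f * μ) h * convPowDeriv μ (f * μ) k (h⁻¹ * g))
          + μ h * convPowSqMoment μ f k (h⁻¹ * g)) := fun h => by
      simp only [Pi.mul_apply, Pi.pow_apply]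
      ring
    refine HasSum.nonneg (fun h => ?_) hcond
    rw [← hsplit]
    exact mul_nonneg (hμ0 h) (ih _ _)

theorem two_mul_tsum_abs_convPowDeriv_le (hμ : IsProbMeasure μ) (hf2 : Summable (f ^ 2 * μ))
    (hmean : ∑' g, (f * μ) g = 0) (l : ℝ) (k : ℕ) :
    2 * l * ∑' g, |convPowDeriv μ (f * μ) k g| ≤ l ^ 2 + k * ∑' g, (f ^ 2 * μ) g := by
  have hf := summable_mul_of_summable_sq_mul hμ.1 hμ.2.1 hf2
  have hρ := isProbMeasure_convPow hμ k
  have hQ := summable_convPowSqMoment hμ.2.1 hf hf2 k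
  calc 2 * l * ∑' g, |convPowDeriv μ (f * μ) k g|
      = ∑' g, 2 * l * |convPowDeriv μ (f * μ) k g| := tsum_mul_left.symm
    _ ≤ ∑' g, (l ^ 2 * convPow μ k g + convPowSqMoment μ f k g) :=
        ((summable_convPowDeriv hμ.2.1 hf k).abs.mul_left _).tsum_le_tsum
          (fun g => two_mul_mul_abs_le_of_forall_quadratic_nonneg
            (convPowSqMoment_quadratic_nonneg hμ.1 hμ.2.1 hf hf2 k · g) l)
          ((hρ.2.1.mul_left _).add hQ)
    _ = l ^ 2 + k * ∑' g, (f ^ 2 * μ) g := by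
        rw [Summable.tsum_add (hρ.2.1.mul_left _) hQ, tsum_mul_left, hρ.2.2, mul_one,
          tsum_convPowSqMoment hμ hf hf2 hmean]

theorem tendsto_tsum_abs_convPowDeriv_div (hμ : IsProbMeasure μ) (hf2 : Summable (f ^ 2 * μ))
    (hmean : ∑' g, (f * μ) g = 0) :
    Tendsto (fun k : ℕ => 1 / (k : ℝ) * ∑' g, |convPowDeriv μ (f * μ) k g|) atTop (𝓝 0) := by
  set V := ∑' g, (f ^ 2 * μ) g
  refine squeeze_zero' (g := fun k : ℕ => (1 + V) / 2 / √(k : ℝ))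
    (.of_forall fun k => by positivity) ?_
    (tendsto_const_nhds.div_atTop (Real.tendsto_sqrt_atTop.comp tendsto_natCast_atTop_atTop))
  filter_upwards [eventually_gt_atTop 0] with k hk
  have hs : 0 < √(k : ℝ) := Real.sqrt_pos.2 (by exact_mod_cast hk)
  have hbound := two_mul_tsum_abs_convPowDeriv_le hμ hf2 hmean √(k : ℝ) k
  rw [Real.sq_sqrt (Nat.cast_nonneg k)] at hbound
  rw [div_div, le_div_iff₀ (by positivity), one_div_mul_eq_div, div_mul_eq_mul_div,
    div_le_iff₀ (by exact_mod_cast hk)]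
  linarith

end SecondMoment

theorem exists_finset_tsum_indicator_compl_lt {α : Type*} (u : α → ℝ) {ε : ℝ} (hε : 0 < ε) :
    ∃ s : Finset α, ∑' x, (↑s : Set α)ᶜ.indicator u x < ε := by
  obtain ⟨s, hs⟩ := ((tendsto_tsum_compl_atTop_zero u).eventually (gt_mem_nhds hε)).exists
  exact ⟨s, by rwa [← tsum_subtype]⟩

theorem exists_balanced_density_near {G : Type*} {μ η : G → ℝ} (hμ : IsProbMeasure μ)
    (hη : Summable η) (hbal : ∑' g, η g = 0) (hac : ∀ g, μ g = 0 → η g = 0) {ε : ℝ}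
    (hε : 0 < ε) :
    ∃ f : G → ℝ, Summable (f ^ 2 * μ) ∧ ∑' g, (f * μ) g = 0 ∧ ∑' g, |η g - (f * μ) g| < ε := by
  obtain ⟨s, hs⟩ := exists_finset_tsum_indicator_compl_lt (fun g => |η g|) (half_pos hε)
  set m := ∑' g, (↑s : Set G).indicator η g
  have hm : |m| < ε / 2 := by
    have htail : m = -∑' g, (↑s : Set G)ᶜ.indicator η g := by
      rw [eq_neg_iff_add_eq_zero, ← Summable.tsum_add (hη.indicator _) (hη.indicator _), ← hbal]
      exact tsum_congr fun g => Set.indicator_self_add_compl_apply _ _ _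
    rw [htail, abs_neg]
    refine lt_of_le_of_lt ?_ hs
    simpa only [Real.norm_eq_abs, norm_indicator_eq_indicator_norm] using
      norm_tsum_le_tsum_norm (hη.indicator (↑s : Set G)ᶜ).norm
  set φ := (↑s : Set G).indicator (η / μ)
  have hφμ (g : G) : φ g * μ g = (↑s : Set G).indicator η g := by
    by_cases hg : g ∈ s
    · by_cases hμg : μ g = 0
      · simp [φ, hg, hμg, hac g hμg]
      · simp [φ, hg, div_mul_cancel₀ _ hμg]
    · simp [φ, hg]
  set f : G → ℝ := fun g => φ g - m
  have hfμ (g : G) : (f * μ) g = (↑s : Set G).indicator η g - m * μ g := by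
    rw [Pi.mul_apply, sub_mul, hφμ]
  have hf2 : Summable (f ^ 2 * μ) := by
    have hfin : Summable fun g => φ g ^ 2 * μ g :=
      summable_of_ne_finset_zero (s := s) fun g hg => by simp [φ, hg]
    refine .of_nonneg_of_le (fun g => mul_nonneg (sq_nonneg _) (hμ.1 g)) (fun g => ?_)
      ((hfin.mul_left 2).add (hμ.2.1.mul_left (2 * m ^ 2)))
    have hsq : (φ g - m) ^ 2 ≤ 2 * φ g ^ 2 + 2 * m ^ 2 := by nlinarith [sq_nonneg (φ g + m)]
    simpa [mul_assoc, add_mul] using mul_le_mul_of_nonneg_right hsq (hμ.1 g)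
  refine ⟨f, hf2, ?_, ?_⟩
  · rw [tsum_congr hfμ, Summable.tsum_sub (hη.indicator _) (hμ.2.1.mul_left m), tsum_mul_left,
      hμ.2.2, mul_one, sub_self]
  · have hpt (g : G) : |η g - (f * μ) g|
        ≤ (↑s : Set G)ᶜ.indicator (fun g => |η g|) g + |m| * μ g := by
      have hcompl :
          |(↑s : Set G)ᶜ.indicator η g| = (↑s : Set G)ᶜ.indicator (fun g => |η g|) g := by
        simpa only [Real.norm_eq_abs] using
          norm_indicator_eq_indicator_norm (s := (↑s : Set G)ᶜ) (f := η) (a := g)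
      calc |η g - (f * μ) g| = |(↑s : Set G)ᶜ.indicator η g + m * μ g| := by
            rw [hfμ, ← Set.indicator_self_add_compl_apply (↑s : Set G) η g]
            ring_nf
        _ ≤ _ := by simpa only [abs_mul, abs_of_nonneg (hμ.1 g), hcompl] using
              abs_add_le ((↑s : Set G)ᶜ.indicator η g) (m * μ g)
    calc ∑' g, |η g - (f * μ) g|
        ≤ ∑' g, ((↑s : Set G)ᶜ.indicator (fun g => |η g|) g + |m| * μ g) :=
          (hη.sub (summable_mul_of_summable_sq_mul hμ.1 hμ.2.1 hf2)).abs.tsum_le_tsum hpt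
            ((hη.abs.indicator _).add (hμ.2.1.mul_left _))
      _ = ∑' g, (↑s : Set G)ᶜ.indicator (fun g => |η g|) g + |m| := by
          rw [Summable.tsum_add (hη.abs.indicator _) (hμ.2.1.mul_left _), tsum_mul_left, hμ.2.2,
            mul_one]
      _ < ε := by linarith

theorem balanced_convolution_decay_general
    {G : Type*} [Group G]
    (μ : G → ℝ) (hμ : IsProbMeasure μ)
    (η : G → ℝ) (hη : Summable fun g : G => |η g|)
    (hbal : ∑' g : G, η g = 0)
    (hac : ∀ g : G, μ g = 0 → η g = 0) :
    Filter.Tendsto (fun k : ℕ =>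
        (1 / (k : ℝ)) * ∑' g : G,
          |∑ i ∈ Finset.range k, conv (convPow μ i) (conv η (convPow μ (k - 1 - i))) g|)
      Filter.atTop (𝓝 0) := by
  change Tendsto (fun k : ℕ => 1 / (k : ℝ) * ∑' g, |convPowDeriv μ η k g|) atTop (𝓝 0)
  refine Metric.tendsto_atTop.2 fun ε hε => ?_
  obtain ⟨f, hf2, hmean, hnear⟩ :=
    exists_balanced_density_near hμ hη.of_abs hbal hac (half_pos hε)
  obtain ⟨N, hN⟩ :=
    Metric.tendsto_atTop.1 (tendsto_tsum_abs_convPowDeriv_div hμ hf2 hmean) (ε / 2) (half_pos hε)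
  refine ⟨N, fun k hk => ?_⟩
  have hlip := tsum_abs_convPowDeriv_le_add hμ hη.of_abs
    (summable_mul_of_summable_sq_mul hμ.1 hμ.2.1 hf2) k
  have hsmall := hN k hk
  rw [Real.dist_eq, sub_zero, abs_of_nonneg (by positivity)] at hsmall ⊢
  calc 1 / (k : ℝ) * ∑' g, |convPowDeriv μ η k g|
      ≤ (1 / k * k) * ∑' g, |η g - (f * μ) g| + 1 / k * ∑' g, |convPowDeriv μ (f * μ) k g| := by
        rw [mul_assoc, ← mul_add]
        gcongr
    _ < ε := by
        have hk1 : 1 / (k : ℝ) * k ≤ 1 := by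
          rw [one_div_mul_eq_div]
          exact div_self_le_one _
        have hd : 0 ≤ ∑' g, |η g - (f * μ) g| := tsum_nonneg fun g => abs_nonneg _
        nlinarith

/-- Cesàro-type total-variation decay for a balanced density (used in the proof of
differentiability of the drift). -/
theorem balanced_convolution_decay
    {G : Type*} [Group G] [Countable G]
    (μ : G → ℝ) (hμ : IsProbMeasure μ)
    (η : G → ℝ) (hη : Summable fun g : G => |η g|)
    (hbal : ∑' g : G, η g = 0)
    (hac : ∀ g : G, μ g = 0 → η g = 0) :
    Filter.Tendsto (fun k : ℕ =>
        (1 / (k : ℝ)) * ∑' g : G,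
          |∑ i ∈ Finset.range k, conv (convPow μ i) (conv η (convPow μ (k - 1 - i))) g|)
      Filter.atTop (𝓝 0) :=
  balanced_convolution_decay_general μ hμ η hη hbal hac
end

section
/- Let X be a geodesic metric space with basepoint o, let G be a group acting on X by isometries, let (g_i)_{i∈ℤ} ∈ G^ℤ, let ε' ≥ 0 and let k ≥ 1. Suppose (g_i) ∈ A_{k;ε'}, i.e. there exist ε'-squeezing geodesics γ and γ', both of length L, such that for all n, m ≥ k: the images of γ and γ' are contained in the 0.01L-neighbourhood of every geodesic from q_m to p_n; the image of γ is contained in the 0.01L-neighbourhood of every geodesic from o to p_n; and the image of γ' is contained in the 0.01L-neighbourhood of every geodesic from q_m to q₀. Then for all n, m, n', m' ≥ k one has |R_{n,m} − R_{n',m'}| < 10ε'. -/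
open Filter Topology Pointwise

/-- `f` parametrizes a geodesic from `x` to `y` by arclength on `[0, dist x y]`. -/
def IsGeodesicSegment {X : Type*} [MetricSpace X] (f : ℝ → X) (x y : X) : Prop :=
  f 0 = x ∧ f (dist x y) = y ∧
    ∀ s ∈ Set.Icc (0 : ℝ) (dist x y), ∀ t ∈ Set.Icc (0 : ℝ) (dist x y),
      dist (f s) (f t) = |s - t|

/-- `X` is a geodesic metric space: any two points are joined by a geodesic. -/
def IsGeodesicSpace (X : Type*) [MetricSpace X] : Prop :=
  ∀ x y : X, ∃ f : ℝ → X, IsGeodesicSegment f x y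

/-- A geodesic `γ : [0,L] → X` is `ε`-squeezing: there is a point `p` on it that is
`ε`-close to every geodesic whose `0.01L`-neighbourhood contains the image of `γ`. -/
def IsSqueezingGeodesic {X : Type*} [MetricSpace X] (ε : ℝ) (γ : ℝ → X) (L : ℝ) : Prop :=
  0 ≤ L ∧
  (∀ s ∈ Set.Icc (0 : ℝ) L, ∀ t ∈ Set.Icc (0 : ℝ) L, dist (γ s) (γ t) = |s - t|) ∧
  ∃ p ∈ γ '' Set.Icc (0 : ℝ) L,
    ∀ (f : ℝ → X) (x y : X), IsGeodesicSegment f x y →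
      (∀ z ∈ γ '' Set.Icc (0 : ℝ) L,
        Metric.infDist z (f '' Set.Icc (0 : ℝ) (dist x y)) ≤ 0.01 * L) →
      Metric.infDist p (f '' Set.Icc (0 : ℝ) (dist x y)) < ε

/-- `p_n = (g₁⋯g_n)·o` (with `p₀ = o`). -/
def pPoint {G X : Type*} [Group G] [MetricSpace X] [MulAction G X]
    (o : X) (g : ℤ → G) (n : ℕ) : X :=
  (List.ofFn fun i : Fin n => g (((i : ℕ) : ℤ) + 1)).prod • o

/-- `q_m = (g₀⁻¹ g₋₁⁻¹ ⋯ g₋ₘ⁻¹)·o`. -/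
def qPoint {G X : Type*} [Group G] [MetricSpace X] [MulAction G X]
    (o : X) (g : ℤ → G) (m : ℕ) : X :=
  (List.ofFn fun j : Fin (m + 1) => (g (-((j : ℕ) : ℤ)))⁻¹).prod • o

/-- The defect `R_{n,m} = d(q_m,q₀) + d(q₀,o) + d(o,p_n) − d(q_m,p_n)`. -/
noncomputable def Rseq {G X : Type*} [Group G] [MetricSpace X] [MulAction G X]
    (o : X) (g : ℤ → G) (n m : ℕ) : ℝ :=
  dist (qPoint o g m) (qPoint o g 0) + dist (qPoint o g 0) o + dist o (pPoint o g n)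
    - dist (qPoint o g m) (pPoint o g n)

/-- The event `A_{k;ε'}`: there are `ε'`-squeezing geodesics `γ, γ'` of length `L`
such that for all `n, m ≥ k`, the images of `γ` and `γ'` lie in the `0.01L`-neighbourhood
of every geodesic from `q_m` to `p_n`, the image of `γ` lies in the `0.01L`-neighbourhood
of every geodesic from `o` to `p_n`, and the image of `γ'` lies in the `0.01L`-neighbourhood
of every geodesic from `q_m` to `q₀`. -/
def ASqueeze {G X : Type*} [Group G] [MetricSpace X] [MulAction G X]
    (o : X) (ε' : ℝ) (k : ℕ) (g : ℤ → G) : Prop :=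
  ∃ (γ γ' : ℝ → X) (L : ℝ),
    IsSqueezingGeodesic ε' γ L ∧ IsSqueezingGeodesic ε' γ' L ∧
    ∀ n : ℕ, k ≤ n → ∀ m : ℕ, k ≤ m →
      (∀ f : ℝ → X, IsGeodesicSegment f (qPoint o g m) (pPoint o g n) →
        (∀ z ∈ γ '' Set.Icc (0 : ℝ) L,
          Metric.infDist z
            (f '' Set.Icc (0 : ℝ) (dist (qPoint o g m) (pPoint o g n))) ≤ 0.01 * L) ∧
        (∀ z ∈ γ' '' Set.Icc (0 : ℝ) L,
          Metric.infDist z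
            (f '' Set.Icc (0 : ℝ) (dist (qPoint o g m) (pPoint o g n))) ≤ 0.01 * L)) ∧
      (∀ f : ℝ → X, IsGeodesicSegment f o (pPoint o g n) →
        ∀ z ∈ γ '' Set.Icc (0 : ℝ) L,
          Metric.infDist z (f '' Set.Icc (0 : ℝ) (dist o (pPoint o g n))) ≤ 0.01 * L) ∧
      (∀ f : ℝ → X, IsGeodesicSegment f (qPoint o g m) (qPoint o g 0) →
        ∀ z ∈ γ' '' Set.Icc (0 : ℝ) L,
          Metric.infDist z
            (f '' Set.Icc (0 : ℝ) (dist (qPoint o g m) (qPoint o g 0))) ≤ 0.01 * L)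

/-- If `w` is within `ε` of a geodesic from `x` to `y`, then the path through `w`
has length less than `dist x y + 2ε`. -/
lemma split_est {X : Type*} [MetricSpace X] {f : ℝ → X} {x y w : X} {ε : ℝ}
    (hf : IsGeodesicSegment f x y)
    (h : Metric.infDist w (f '' Set.Icc (0 : ℝ) (dist x y)) < ε) :
    dist x w + dist w y < dist x y + 2 * ε := by
  obtain ⟨hf0, hfd, hiso⟩ := hf
  have hne : (f '' Set.Icc (0 : ℝ) (dist x y)).Nonempty :=
    ⟨f 0, ⟨0, ⟨le_refl 0, dist_nonneg⟩, rfl⟩⟩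
  obtain ⟨u, hu, hdu⟩ := (Metric.infDist_lt_iff hne).1 h
  obtain ⟨t, ht, rfl⟩ := hu
  have h1 : dist x (f t) = t := by
    have := hiso 0 ⟨le_refl _, dist_nonneg⟩ t ht
    rw [hf0] at this
    rw [this, abs_of_nonpos (by linarith [ht.1])]
    ring
  have h2 : dist (f t) y = dist x y - t := by
    have := hiso t ht (dist x y) ⟨dist_nonneg, le_refl _⟩
    rw [hfd] at this
    rw [this, abs_of_nonpos (by linarith [ht.2])]
    ring
  have t1 : dist x w ≤ dist x (f t) + dist (f t) w := dist_triangle _ _ _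
  have t2 : dist w y ≤ dist w (f t) + dist (f t) y := dist_triangle _ _ _
  have hsym : dist (f t) w = dist w (f t) := dist_comm _ _
  rw [dist_comm w (f t)] at hdu
  linarith

/-- Lemma 4.6 (squeezing comparison): on the event `A_{k;ε'}`, the defects `R_{n,m}`
for `n, m ≥ k` differ pairwise by less than `10 ε'`. -/
theorem squeeze_compare
    {G X : Type*} [Group G] [MetricSpace X] [MulAction G X]
    (o : X) (hgeo : IsGeodesicSpace X)
    (hiso : ∀ g : G, Isometry fun x : X => g • x)
    (g : ℤ → G) (ε' : ℝ) (hε' : 0 ≤ ε') (k : ℕ) (hk : 1 ≤ k)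
    (hA : ASqueeze o ε' k g) :
    ∀ n : ℕ, k ≤ n → ∀ m : ℕ, k ≤ m → ∀ n' : ℕ, k ≤ n' → ∀ m' : ℕ, k ≤ m' →
      |Rseq o g n m - Rseq o g n' m'| < 10 * ε' := by
  obtain ⟨γ, γ', L, ⟨hL, hγiso, p, hpmem, hp⟩, ⟨hL', hγ'iso, p', hp'mem, hp'⟩, hcond⟩ := hA
  -- ε' must be positive
  have hpos : 0 < ε' := by
    obtain ⟨f, hf⟩ := hgeo (qPoint o g k) (pPoint o g k)
    have h := ((hcond k le_rfl k le_rfl).1 f hf).1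
    have h2 := hp f _ _ hf h
    exact lt_of_le_of_lt Metric.infDist_nonneg h2
  have key : ∀ n, k ≤ n → ∀ m, k ≤ m →
      |Rseq o g n m - (dist p' (qPoint o g 0) + dist (qPoint o g 0) o
        + dist o (pPoint o g n) - dist p' (pPoint o g n))| < 2 * ε' ∧
      |Rseq o g n m - (dist (qPoint o g m) (qPoint o g 0) + dist (qPoint o g 0) o
        + dist o p - dist (qPoint o g m) p)| < 2 * ε' := by
    intro n hn m hm
    obtain ⟨hc1, hc2, hc3⟩ := hcond n hn m hm
    obtain ⟨f1, hf1⟩ := hgeo (qPoint o g m) (pPoint o g n)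
    obtain ⟨f2, hf2⟩ := hgeo o (pPoint o g n)
    obtain ⟨f3, hf3⟩ := hgeo (qPoint o g m) (qPoint o g 0)
    have e1 := split_est hf1 (hp' f1 _ _ hf1 (hc1 f1 hf1).2)
    have e1' := dist_triangle (qPoint o g m) p' (pPoint o g n)
    have e2 := split_est hf1 (hp f1 _ _ hf1 (hc1 f1 hf1).1)
    have e2' := dist_triangle (qPoint o g m) p (pPoint o g n)
    have e3 := split_est hf2 (hp f2 _ _ hf2 (hc2 f2 hf2))
    have e3' := dist_triangle o p (pPoint o g n)
    have e4 := split_est hf3 (hp' f3 _ _ hf3 (hc3 f3 hf3))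
    have e4' := dist_triangle (qPoint o g m) p' (qPoint o g 0)
    have hq1 : dist p' (qPoint o g 0) = dist (qPoint o g 0) p' := dist_comm _ _
    have hq2 : dist p' (pPoint o g n) = dist (pPoint o g n) p' := dist_comm _ _
    have hq3 : dist (qPoint o g m) p = dist p (qPoint o g m) := dist_comm _ _
    have hq4 : dist o p = dist p o := dist_comm _ _
    unfold Rseq
    constructor <;> rw [abs_lt] <;> constructor <;> linarith
  intro n hn m hm n' hn' m' hm'
  obtain ⟨k1, _⟩ := key n hn m hm
  obtain ⟨k2, k3⟩ := key n hn m' hm'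
  obtain ⟨_, k4⟩ := key n' hn' m' hm'
  rw [abs_lt] at k1 k2 k3 k4 ⊢
  constructor <;> linarith
end

section
/- Let X be a geodesic metric space with basepoint o, let G be a group acting on X by isometries, and let (g_i)_{i∈ℤ} ∈ G^ℤ be a sequence such that for every ε' > 0 there exists k ≥ 1 with (g_i) ∈ A_{k;ε'} (as defined in the context). Then the double limit R := lim_{n,m→∞} R_{n,m} exists in ℝ, i.e. the net (R_{n,m})_{n,m} converges as min(n,m) → ∞. -/
open Filter Topology Pointwise

/-- If `w` is within `ε` of a geodesic from `x` to `y`, then `w` is `2ε`-between `x` and `y`. -/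
lemma between_of_infDist_lt {X : Type*} [MetricSpace X] {f : ℝ → X} {x y w : X} {ε : ℝ}
    (h : IsGeodesicSegment f x y)
    (hw : Metric.infDist w (f '' Set.Icc 0 (dist x y)) < ε) :
    dist x w + dist w y ≤ dist x y + 2 * ε := by
  obtain ⟨h0, hD, hI⟩ := h
  have hne : (f '' Set.Icc (0:ℝ) (dist x y)).Nonempty :=
    ⟨f 0, Set.mem_image_of_mem f ⟨le_rfl, dist_nonneg⟩⟩
  obtain ⟨u, hu, hlt⟩ := (Metric.infDist_lt_iff hne).mp hw
  obtain ⟨t, ht, rfl⟩ := hu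
  have ht0 : (0:ℝ) ≤ t := ht.1
  have ht1 : t ≤ dist x y := ht.2
  have e1 : dist (f 0) (f t) = |0 - t| := hI 0 ⟨le_rfl, dist_nonneg⟩ t ht
  have e2 : dist (f (dist x y)) (f t) = |dist x y - t| :=
    hI (dist x y) ⟨dist_nonneg, le_rfl⟩ t ht
  have e1' : dist x (f t) = t := by
    rw [← h0, e1, abs_of_nonpos (by linarith)]; ring
  have e2' : dist (f t) y = dist x y - t := by
    have e3 : dist (f t) (f (dist x y)) = |t - dist x y| :=
      hI t ht (dist x y) ⟨dist_nonneg, le_rfl⟩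
    rw [hD] at e3
    rw [e3, abs_of_nonpos (by linarith)]; ring
  have t1 : dist x w ≤ dist x (f t) + dist (f t) w := dist_triangle _ _ _
  have t2 : dist w y ≤ dist w (f t) + dist (f t) y := dist_triangle _ _ _
  have hc : dist (f t) w = dist w (f t) := dist_comm _ _
  linarith

/-- Corollary 4.7: if the path eventually lies in every `A_{k;ε'}`, the defect
`R_{n,m}` converges as `min(n,m) → ∞`. -/
theorem squeeze_limit_exists
    {G X : Type*} [Group G] [MetricSpace X] [MulAction G X]
    (o : X) (hgeo : IsGeodesicSpace X)
    (hiso : ∀ g : G, Isometry fun x : X => g • x)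
    (g : ℤ → G)
    (hA : ∀ ε' : ℝ, 0 < ε' → ∃ k : ℕ, 1 ≤ k ∧ ASqueeze o ε' k g) :
    ∃ R : ℝ, Filter.Tendsto (fun p : ℕ × ℕ => Rseq o g p.1 p.2)
      (Filter.atTop ×ˢ Filter.atTop) (𝓝 R) := by
  have hmap : Cauchy (Filter.map (fun p : ℕ × ℕ => Rseq o g p.1 p.2)
      (Filter.atTop ×ˢ Filter.atTop)) := by
    rw [Metric.cauchy_iff]
    refine ⟨inferInstance, ?_⟩
    intro ε hε
    obtain ⟨k, hk1, γ, γ', L, hγ, hγ', hcond⟩ := hA (ε / 9) (by linarith)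
    obtain ⟨-, -, p, -, hp⟩ := hγ
    obtain ⟨-, -, p', -, hp'⟩ := hγ'
    -- varying m, fixed n : comparison via the squeezing point p' of γ'
    have key1 : ∀ n, k ≤ n → ∀ m, k ≤ m → ∀ m₂, k ≤ m₂ →
        |Rseq o g n m - Rseq o g n m₂| ≤ 4 * (ε / 9) := by
      intro n hn m hm m₂ hm₂
      have est : ∀ m₃, k ≤ m₃ →
          |(dist (qPoint o g m₃) (qPoint o g 0) - dist (qPoint o g m₃) (pPoint o g n))
            - (dist p' (qPoint o g 0) - dist p' (pPoint o g n))| ≤ 2 * (ε / 9) := by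
        intro m₃ hm₃
        obtain ⟨f1, hf1⟩ := hgeo (qPoint o g m₃) (qPoint o g 0)
        obtain ⟨f2, hf2⟩ := hgeo (qPoint o g m₃) (pPoint o g n)
        obtain ⟨c1, c2, c3⟩ := hcond n hn m₃ hm₃
        have b1 := between_of_infDist_lt hf1 (hp' f1 _ _ hf1 (c3 f1 hf1))
        have b2 := between_of_infDist_lt hf2 (hp' f2 _ _ hf2 ((c1 f2 hf2).2))
        have t1 := dist_triangle (qPoint o g m₃) p' (qPoint o g 0)
        have t2 := dist_triangle (qPoint o g m₃) p' (pPoint o g n)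
        rw [abs_le]
        constructor <;> linarith
      have d1 := est m hm
      have d2 := est m₂ hm₂
      rw [abs_le] at d1 d2
      simp only [Rseq]
      rw [abs_le]
      constructor <;> linarith [d1.1, d1.2, d2.1, d2.2]
    -- varying n, fixed m : comparison via the squeezing point p of γ
    have key2 : ∀ m, k ≤ m → ∀ n, k ≤ n → ∀ n₂, k ≤ n₂ →
        |Rseq o g n m - Rseq o g n₂ m| ≤ 4 * (ε / 9) := by
      intro m hm n hn n₂ hn₂
      have est : ∀ n₃, k ≤ n₃ →
          |(dist o (pPoint o g n₃) - dist (qPoint o g m) (pPoint o g n₃))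
            - (dist o p - dist (qPoint o g m) p)| ≤ 2 * (ε / 9) := by
        intro n₃ hn₃
        obtain ⟨f1, hf1⟩ := hgeo o (pPoint o g n₃)
        obtain ⟨f2, hf2⟩ := hgeo (qPoint o g m) (pPoint o g n₃)
        obtain ⟨c1, c2, c3⟩ := hcond n₃ hn₃ m hm
        have b1 := between_of_infDist_lt hf1 (hp f1 _ _ hf1 (c2 f1 hf1))
        have b2 := between_of_infDist_lt hf2 (hp f2 _ _ hf2 ((c1 f2 hf2).1))
        have t1 := dist_triangle o p (pPoint o g n₃)
        have t2 := dist_triangle (qPoint o g m) p (pPoint o g n₃)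
        rw [abs_le]
        constructor <;> linarith
      have d1 := est n hn
      have d2 := est n₂ hn₂
      rw [abs_le] at d1 d2
      simp only [Rseq]
      rw [abs_le]
      constructor <;> linarith [d1.1, d1.2, d2.1, d2.2]
    refine ⟨(fun q : ℕ × ℕ => Rseq o g q.1 q.2) '' (Set.Ici k ×ˢ Set.Ici k), ?_, ?_⟩
    · exact Filter.image_mem_map
        (Filter.prod_mem_prod (Filter.Ici_mem_atTop k) (Filter.Ici_mem_atTop k))
    · rintro x ⟨⟨n, m⟩, ⟨hn, hm⟩, rfl⟩ y ⟨⟨n₂, m₂⟩, ⟨hn₂, hm₂⟩, rfl⟩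
      have h1 := key1 n hn m hm m₂ hm₂
      have h2 := key2 m₂ hm₂ n hn n₂ hn₂
      have habs : |Rseq o g n m - Rseq o g n₂ m₂| ≤
          |Rseq o g n m - Rseq o g n m₂| + |Rseq o g n m₂ - Rseq o g n₂ m₂| :=
        abs_sub_le _ _ _
      rw [Real.dist_eq]
      calc |Rseq o g n m - Rseq o g n₂ m₂|
          ≤ |Rseq o g n m - Rseq o g n m₂| + |Rseq o g n m₂ - Rseq o g n₂ m₂| := habs
        _ ≤ 4 * (ε / 9) + 4 * (ε / 9) := by linarith
        _ < ε := by linarith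
  obtain ⟨R, hR⟩ := CompleteSpace.complete hmap
  exact ⟨R, hR⟩
end

section
/- Let X be a geodesic metric space with basepoint o and let g be a contracting isometry of X. Then for every W > 0 there exists N ∈ ℕ such that for every a ∈ ℝ, the set {i ∈ ℤ_{>0} : a ≤ d(o, gⁱ·o) ≤ a + W} has at most N elements. (Equivalently: windows of any fixed width contain a uniformly bounded number of orbit-point norms ‖gⁱ‖ = d(o, gⁱ·o).) -/
open Filter Topology Pointwise

/-- Nearest-point projection of `x` to the set `A`. -/
def projSet {X : Type*} [MetricSpace X] (A : Set X) (x : X) : Set X :=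
  {a ∈ A | dist x a = Metric.infDist x A}

/-- Nearest-point projection of the set `B` to the set `A`. -/
def projSetOf {X : Type*} [MetricSpace X] (A B : Set X) : Set X :=
  ⋃ x ∈ B, projSet A x

/-- A `K`-quasigeodesic indexed by `ℤ`. -/
def IsQuasigeodesicZ {X : Type*} [MetricSpace X] (K : ℝ) (γ : ℤ → X) : Prop :=
  ∀ s t : ℤ, |(s : ℝ) - (t : ℝ)| / K - K ≤ dist (γ s) (γ t) ∧
    dist (γ s) (γ t) ≤ K * |(s : ℝ) - (t : ℝ)| + K

/-- A `K`-contracting axis indexed by `ℤ`: a `K`-quasigeodesic such that every geodesic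
staying `K`-far from it has nearest-point projection of diameter `< K`. -/
def IsContractingAxisZ {X : Type*} [MetricSpace X] (K : ℝ) (γ : ℤ → X) : Prop :=
  IsQuasigeodesicZ K γ ∧
    ∀ (f : ℝ → X) (x y : X), IsGeodesicSegment f x y →
      (∀ t ∈ Set.Icc (0 : ℝ) (dist x y), K ≤ Metric.infDist (f t) (Set.range γ)) →
      EMetric.diam (projSetOf (Set.range γ) (f '' Set.Icc (0 : ℝ) (dist x y)))
        < ENNReal.ofReal K

/-- The `ℤ`-orbit of the basepoint `o` under powers of `g`. -/
def zorbit {G X : Type*} [Group G] [MetricSpace X] [MulAction G X] (o : X) (g : G) : Set X :=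
  Set.range fun i : ℤ => g ^ i • o

/-- `g` is a contracting isometry: its orbit map `i ↦ g^i • o` is a `K`-contracting axis
for some `K > 1`. -/
def IsContractingIsom {G X : Type*} [Group G] [MetricSpace X] [MulAction G X]
    (o : X) (g : G) : Prop :=
  ∃ K : ℝ, 1 < K ∧ IsContractingAxisZ K fun i : ℤ => g ^ i • o

section Aux

variable {X : Type*} [MetricSpace X] {K : ℝ} {γ : ℤ → X}

lemma proj_nonempty (hK : 1 < K) (hq : IsQuasigeodesicZ K γ) (x : X) :
    (projSet (Set.range γ) x).Nonempty := by
  have hKpos : (0:ℝ) < K := lt_trans one_pos hK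
  set D := dist x (γ 0) with hD
  have hD0 : 0 ≤ D := dist_nonneg
  set M : ℕ := ⌈K * (K + 2 * D)⌉₊ + 1 with hM
  obtain ⟨i0, hi0F, hmin⟩ := (Finset.Icc (-(M:ℤ)) (M:ℤ)).exists_min_image
      (fun i => dist x (γ i)) ⟨0, by simp⟩
  have hglob : ∀ i : ℤ, dist x (γ i0) ≤ dist x (γ i) := by
    intro i
    by_cases hi : i ∈ Finset.Icc (-(M:ℤ)) (M:ℤ)
    · exact hmin i hi
    · have h0 : dist x (γ i0) ≤ D := hmin 0 (by simp)
      have habsZ : (M:ℤ) < |i| := by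
        simp only [Finset.mem_Icc, not_and_or, not_le] at hi
        rcases hi with h | h
        · exact lt_abs.mpr (Or.inr (by omega))
        · exact lt_abs.mpr (Or.inl h)
      have habs : (M:ℝ) < |(i:ℝ)| := by
        rw [← Int.cast_abs]
        exact_mod_cast habsZ
      have hq0 := (hq i 0).1
      have htri : dist (γ i) (γ 0) ≤ dist (γ i) x + dist x (γ 0) := dist_triangle _ _ _
      have hMge : K * (K + 2 * D) ≤ (M:ℝ) := by
        have := Nat.le_ceil (K * (K + 2 * D))
        push_cast [hM]
        push_cast at this
        linarith
      have hdiv : K + 2 * D < |(i:ℝ)| / K := by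
        rw [lt_div_iff₀ hKpos]
        nlinarith
      have hq1 : |(i:ℝ)|/K - K ≤ dist (γ i) (γ 0) := by
        simpa using hq0
      have h3 : dist (γ i) x = dist x (γ i) := dist_comm _ _
      have : D < dist x (γ i) := by linarith [hdiv, hq1, htri, hD]
      linarith
  refine ⟨γ i0, ⟨i0, rfl⟩, ?_⟩
  have hne : (Set.range γ).Nonempty := ⟨γ 0, 0, rfl⟩
  refine le_antisymm ?_ (Metric.infDist_le_dist_of_mem ⟨i0, rfl⟩)
  by_contra hc
  push_neg at hc
  obtain ⟨y, hyA, hyd⟩ := (Metric.infDist_lt_iff hne).mp hc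
  obtain ⟨j, rfl⟩ := hyA
  exact absurd hyd (not_lt.2 (hglob j))

lemma geodesic_near (hK : 1 < K) (hax : IsContractingAxisZ K γ)
    (hproj : ∀ x : X, (projSet (Set.range γ) x).Nonempty)
    (f : ℝ → X) (x y : X) (hf : IsGeodesicSegment f x y)
    (hx : x ∈ Set.range γ) (hy : y ∈ Set.range γ) :
    ∀ t0 ∈ Set.Icc (0:ℝ) (dist x y), Metric.infDist (f t0) (Set.range γ) ≤ 4 * K := by
  have hKpos : (0:ℝ) < K := lt_trans one_pos hK
  obtain ⟨hf0, hfL, hiso⟩ := hf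
  set L := dist x y with hL
  set A := Set.range γ with hA
  set φ : ℝ → ℝ := fun t => Metric.infDist (f t) A with hφ
  have hLip : ∀ s ∈ Set.Icc (0:ℝ) L, ∀ t ∈ Set.Icc (0:ℝ) L, φ s ≤ φ t + |s - t| := by
    intro s hs t ht
    calc φ s ≤ φ t + dist (f s) (f t) := Metric.infDist_le_infDist_add_dist
    _ = φ t + |s - t| := by rw [hiso s hs t ht]
  have hφ0 : φ 0 = 0 := by
    simp only [hφ, hf0]
    exact Metric.infDist_zero_of_mem hx
  have hφL : φ L = 0 := by
    simp only [hφ, hfL]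
    exact Metric.infDist_zero_of_mem hy
  intro t0 ht0
  show φ t0 ≤ 4 * K
  by_cases hbig : φ t0 < K
  · linarith
  push_neg at hbig
  obtain ⟨ht00, ht0L⟩ := ht0
  -- t1 : last escape time before t0
  set S1 := {t : ℝ | t ∈ Set.Icc (0:ℝ) t0 ∧ φ t < K} with hS1
  have h0S1 : (0:ℝ) ∈ S1 := ⟨⟨le_refl 0, ht00⟩, by rw [hφ0]; linarith⟩
  have hS1bdd : BddAbove S1 := ⟨t0, fun t ht => ht.1.2⟩
  set t1 := sSup S1 with ht1
  have ht10 : 0 ≤ t1 := le_csSup hS1bdd h0S1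
  have ht1t0 : t1 ≤ t0 := csSup_le ⟨0, h0S1⟩ (fun t ht => ht.1.2)
  have h1 : ∀ t, t1 < t → t ≤ t0 → K ≤ φ t := by
    intro t htl htr
    by_contra hc
    push_neg at hc
    exact absurd (le_csSup hS1bdd ⟨⟨le_trans ht10 htl.le, htr⟩, hc⟩) (not_le.2 htl)
  have hub1 : φ t1 ≤ K := by
    by_contra hc
    push_neg at hc
    obtain ⟨s, hsS, hs⟩ := exists_lt_of_lt_csSup ⟨0, h0S1⟩
      (show t1 - (φ t1 - K) < t1 by linarith)
    have hsle : s ≤ t1 := le_csSup hS1bdd hsS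
    have hl := hLip t1 ⟨ht10, le_trans ht1t0 ht0L⟩ s ⟨hsS.1.1, le_trans hsS.1.2 ht0L⟩
    rw [abs_of_nonneg (by linarith)] at hl
    have hφs := hsS.2
    linarith
  have hlb1 : K ≤ φ t1 := by
    rcases eq_or_lt_of_le ht1t0 with h | h
    · rw [h]; exact hbig
    · by_contra hc
      push_neg at hc
      set ε := K - φ t1 with hε
      have hεpos : 0 < ε := by linarith
      set t := min (t1 + ε/2) t0 with htdef
      have htgt : t1 < t := lt_min (by linarith) h
      have hKt : K ≤ φ t := h1 t htgt (min_le_right _ _)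
      have hl := hLip t ⟨by linarith, le_trans (min_le_right _ _) ht0L⟩ t1
        ⟨ht10, le_trans ht1t0 ht0L⟩
      rw [abs_of_nonneg (by linarith)] at hl
      have htle : t - t1 ≤ ε/2 := by
        have := min_le_left (t1 + ε/2) t0
        simp only [← htdef] at this
        linarith
      linarith
  -- t2 : first escape time after t0
  set S2 := {t : ℝ | t ∈ Set.Icc t0 L ∧ φ t < K} with hS2
  have hLS2 : L ∈ S2 := ⟨⟨ht0L, le_refl L⟩, by rw [hφL]; linarith⟩
  have hS2bdd : BddBelow S2 := ⟨t0, fun t ht => ht.1.1⟩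
  set t2 := sInf S2 with ht2
  have ht2L : t2 ≤ L := csInf_le hS2bdd hLS2
  have ht0t2 : t0 ≤ t2 := le_csInf ⟨L, hLS2⟩ (fun t ht => ht.1.1)
  have h2 : ∀ t, t0 ≤ t → t < t2 → K ≤ φ t := by
    intro t htl htr
    by_contra hc
    push_neg at hc
    exact absurd (csInf_le hS2bdd ⟨⟨htl, le_trans htr.le ht2L⟩, hc⟩) (not_le.2 htr)
  have hub2 : φ t2 ≤ K := by
    by_contra hc
    push_neg at hc
    obtain ⟨s, hsS, hs⟩ := exists_lt_of_csInf_lt ⟨L, hLS2⟩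
      (show t2 < t2 + (φ t2 - K) by linarith)
    have hsge : t2 ≤ s := csInf_le hS2bdd hsS
    have hl := hLip t2 ⟨le_trans ht00 ht0t2, ht2L⟩ s ⟨le_trans ht00 hsS.1.1, hsS.1.2⟩
    rw [abs_of_nonpos (by linarith)] at hl
    have hφs := hsS.2
    linarith
  have hlb2 : K ≤ φ t2 := by
    rcases eq_or_lt_of_le ht0t2 with h | h
    · rw [← h]; exact hbig
    · by_contra hc
      push_neg at hc
      set ε := K - φ t2 with hε
      have hεpos : 0 < ε := by linarith
      set t := max (t2 - ε/2) t0 with htdef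
      have htlt : t < t2 := max_lt (by linarith) h
      have hKt : K ≤ φ t := h2 t (le_max_right _ _) htlt
      have hl := hLip t ⟨le_trans ht00 (le_max_right _ _), by linarith⟩ t2
        ⟨le_trans ht00 ht0t2, ht2L⟩
      rw [abs_of_nonpos (by linarith)] at hl
      have htge : t2 - t ≤ ε/2 := by
        have := le_max_left (t2 - ε/2) t0
        simp only [← htdef] at this
        linarith
      linarith
  have ht12 : t1 ≤ t2 := le_trans ht1t0 ht0t2
  have hKon : ∀ t ∈ Set.Icc t1 t2, K ≤ φ t := by
    rintro t ⟨hta, htb⟩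
    rcases le_or_gt t t0 with h | h
    · rcases eq_or_lt_of_le hta with h' | h'
      · rw [← h']; exact hlb1
      · exact h1 t h' h
    · rcases eq_or_lt_of_le htb with h' | h'
      · rw [h']; exact hlb2
      · exact h2 t h.le h'
  have ht1mem : t1 ∈ Set.Icc (0:ℝ) L := ⟨ht10, le_trans ht12 ht2L⟩
  have ht2mem : t2 ∈ Set.Icc (0:ℝ) L := ⟨le_trans ht10 ht12, ht2L⟩
  set x' := f t1 with hx'
  set y' := f t2 with hy'
  have hd : dist x' y' = t2 - t1 := by
    rw [hx', hy', hiso t1 ht1mem t2 ht2mem, abs_of_nonpos (by linarith)]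
    ring
  have hseg' : IsGeodesicSegment (fun s => f (t1 + s)) x' y' := by
    refine ⟨by simp [hx'], ?_, ?_⟩
    · show f (t1 + dist x' y') = y'
      rw [hd, hy']
      congr 1
      ring
    · intro s hs t ht
      rw [hd] at hs ht
      have he := hiso (t1 + s) ⟨by linarith [hs.1], by linarith [hs.2, ht2L]⟩
        (t1 + t) ⟨by linarith [ht.1], by linarith [ht.2, ht2L]⟩
      show dist (f (t1 + s)) (f (t1 + t)) = |s - t|
      rw [he]
      congr 1
      ring
  have hfar : ∀ t ∈ Set.Icc (0:ℝ) (dist x' y'),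
      K ≤ Metric.infDist ((fun s => f (t1 + s)) t) (Set.range γ) := by
    intro t ht
    rw [hd] at ht
    exact hKon (t1 + t) ⟨by linarith [ht.1], by linarith [ht.2]⟩
  have hdiam := hax.2 (fun s => f (t1 + s)) x' y' hseg' hfar
  obtain ⟨a1, ha1⟩ := hproj x'
  obtain ⟨a2, ha2⟩ := hproj y'
  have ha1A : a1 ∈ Set.range γ := ha1.1
  have ha2A : a2 ∈ Set.range γ := ha2.1
  have ha1d : dist x' a1 = Metric.infDist x' (Set.range γ) := ha1.2
  have ha2d : dist y' a2 = Metric.infDist y' (Set.range γ) := ha2.2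
  have hx'mem : x' ∈ (fun s => f (t1 + s)) '' Set.Icc (0:ℝ) (dist x' y') := by
    refine ⟨0, ⟨le_refl 0, by rw [hd]; linarith⟩, by simp [hx']⟩
  have hy'mem : y' ∈ (fun s => f (t1 + s)) '' Set.Icc (0:ℝ) (dist x' y') := by
    refine ⟨dist x' y', ⟨dist_nonneg, le_refl _⟩, ?_⟩
    show f (t1 + dist x' y') = y'
    rw [hd, hy']
    congr 1
    ring
  have h12 : dist a1 a2 < K := by
    have hmem1 : a1 ∈ projSetOf (Set.range γ)
        ((fun s => f (t1 + s)) '' Set.Icc (0:ℝ) (dist x' y')) :=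
      Set.mem_biUnion hx'mem ha1
    have hmem2 : a2 ∈ projSetOf (Set.range γ)
        ((fun s => f (t1 + s)) '' Set.Icc (0:ℝ) (dist x' y')) :=
      Set.mem_biUnion hy'mem ha2
    have hle := EMetric.edist_le_diam_of_mem hmem1 hmem2
    exact edist_lt_ofReal.mp (lt_of_le_of_lt hle hdiam)
  have hxa1 : dist x' a1 ≤ K := by rw [ha1d]; exact hub1
  have hya2 : dist y' a2 ≤ K := by rw [ha2d]; exact hub2
  have hxy : t2 - t1 < 3 * K := by
    have htri := dist_triangle4 x' a1 a2 y'
    rw [hd] at htri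
    rw [dist_comm a2 y'] at htri
    linarith
  have hft0 : dist (f t0) x' = t0 - t1 := by
    rw [hx', hiso t0 ⟨ht00, ht0L⟩ t1 ht1mem, abs_of_nonneg (by linarith)]
  calc φ t0 ≤ dist (f t0) a1 := Metric.infDist_le_dist_of_mem ha1A
  _ ≤ dist (f t0) x' + dist x' a1 := dist_triangle _ _ _
  _ ≤ (t0 - t1) + K := by rw [hft0]; linarith
  _ ≤ 4 * K := by linarith

lemma superadd (hK : 1 < K) (hax : IsContractingAxisZ K γ)
    (hgeo : IsGeodesicSpace X) (i n : ℤ) (hi : 0 ≤ i) (hin : i ≤ n) :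
    dist (γ 0) (γ i) + ((n:ℝ) - (i:ℝ)) / K
      - (13*K + 2*K*((⌈K*(11*K+1)⌉ : ℤ) : ℝ)) ≤ dist (γ 0) (γ n) := by
  classical
  have hKpos : (0:ℝ) < K := lt_trans one_pos hK
  have hproj := proj_nonempty hK hax.1
  obtain ⟨f, hf⟩ := hgeo (γ 0) (γ n)
  have hnear := geodesic_near hK hax hproj f (γ 0) (γ n) hf ⟨0, rfl⟩ ⟨n, rfl⟩
  obtain ⟨hf0, hfL, hisog⟩ := hf
  set L := dist (γ 0) (γ n) with hL
  have hL0 : 0 ≤ L := dist_nonneg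
  set m : ℕ := max ⌈L⌉₊ 1 with hm
  have hm1 : 1 ≤ m := le_max_right _ _
  have hmpos : (0:ℝ) < (m:ℝ) := by exact_mod_cast hm1
  have hLm : L ≤ (m:ℝ) := by
    refine le_trans (Nat.le_ceil L) ?_
    exact_mod_cast le_max_left _ _
  set T : ℕ → ℝ := fun k => (k:ℝ) * L / (m:ℝ) with hT
  have hTmem : ∀ k, k ≤ m → T k ∈ Set.Icc (0:ℝ) L := by
    intro k hk
    constructor
    · positivity
    · rw [hT]
      rw [div_le_iff₀ hmpos]
      have hkm : (k:ℝ) ≤ (m:ℝ) := by exact_mod_cast hk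
      nlinarith
  have hT0 : T 0 = 0 := by simp [hT]
  have hTm : T m = L := by
    rw [hT]
    field_simp
  have hex : ∀ k, (k ≤ m → ∃ j : ℤ, dist (f (T k)) (γ j) ≤ 5*K) := by
    intro k hk
    have h4 := hnear (T k) (hTmem k hk)
    have h5 : Metric.infDist (f (T k)) (Set.range γ) < 5*K := by linarith
    have hne : (Set.range γ).Nonempty := ⟨γ 0, 0, rfl⟩
    obtain ⟨p, hpA, hpd⟩ := (Metric.infDist_lt_iff hne).mp h5
    obtain ⟨j, rfl⟩ := hpA
    exact ⟨j, hpd.le⟩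
  have hexall : ∀ k : ℕ, ∃ j : ℤ, (k ≤ m → dist (f (T k)) (γ j) ≤ 5*K) := by
    intro k
    by_cases hk : k ≤ m
    · obtain ⟨j, hj⟩ := hex k hk
      exact ⟨j, fun _ => hj⟩
    · exact ⟨0, fun h => absurd h hk⟩
  set js : ℕ → ℤ := fun k =>
    if k = 0 then 0 else if k = m then n else Classical.choose (hexall k) with hjs
  have hjs0 : js 0 = 0 := by simp [hjs]
  have hjsm : js m = n := by
    simp only [hjs]
    rw [if_neg (show ¬ m = 0 by omega)]
    simp
  have hjsd : ∀ k, k ≤ m → dist (f (T k)) (γ (js k)) ≤ 5*K := by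
    intro k hk
    by_cases h0 : k = 0
    · subst h0
      rw [hjs0, hT0, hf0, dist_self]
      linarith
    · by_cases hkm : k = m
      · subst hkm
        rw [hjsm, hTm, hfL, dist_self]
        linarith
      · have : js k = Classical.choose (hexall k) := by
          simp only [hjs, if_neg h0, if_neg hkm]
        rw [this]
        exact Classical.choose_spec (hexall k) hk
  set Δ : ℤ := ⌈K*(11*K+1)⌉ with hΔ
  have hΔr : K*(11*K+1) ≤ (Δ:ℝ) := Int.le_ceil _
  have hΔ0 : (0:ℤ) ≤ Δ := by
    have : (0:ℝ) ≤ K*(11*K+1) := by positivity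
    exact Int.ceil_nonneg this
  have hstep : ∀ k, k + 1 ≤ m → |js (k+1) - js k| ≤ Δ := by
    intro k hk
    have h1 := hjsd k (by omega)
    have h2 := hjsd (k+1) hk
    have hTT : dist (f (T k)) (f (T (k+1))) ≤ 1 := by
      rw [hisog (T k) (hTmem k (by omega)) (T (k+1)) (hTmem (k+1) hk)]
      have hdiff : T k - T (k+1) = -(L/(m:ℝ)) := by
        rw [hT]
        push_cast
        field_simp
        ring
      rw [hdiff, abs_neg, abs_of_nonneg (by positivity), div_le_one hmpos]
      exact hLm
    have hdγ : dist (γ (js (k+1))) (γ (js k)) ≤ 10*K + 1 := by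
      have htri := dist_triangle4 (γ (js (k+1))) (f (T (k+1))) (f (T k)) (γ (js k))
      rw [dist_comm (γ (js (k+1))) (f (T (k+1))), dist_comm (f (T (k+1))) (f (T k))] at htri
      linarith
    have hq := (hax.1 (js (k+1)) (js k)).1
    have habs : |((js (k+1) : ℝ)) - ((js k : ℝ))| ≤ K*(11*K+1) := by
      have h' : |((js (k+1) : ℝ)) - ((js k : ℝ))| / K ≤ 11*K+1 := by linarith
      rw [div_le_iff₀ hKpos] at h'
      nlinarith
    have hcast : ((|js (k+1) - js k| : ℤ) : ℝ) ≤ (Δ:ℝ) := by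
      rw [Int.cast_abs, Int.cast_sub]
      push_cast
      linarith
    exact_mod_cast hcast
  have hP : ∃ k, k ≤ m ∧ i ≤ js k := ⟨m, le_refl m, by rw [hjsm]; exact hin⟩
  have hk0m : Nat.find hP ≤ m := (Nat.find_spec hP).1
  have hk0i : i ≤ js (Nat.find hP) := (Nat.find_spec hP).2
  have hjk0 : js (Nat.find hP) ≤ i + Δ := by
    rcases Nat.eq_zero_or_pos (Nat.find hP) with h0 | hpos
    · rw [h0, hjs0]
      rw [h0, hjs0] at hk0i
      omega
    · have hnk' := Nat.find_min hP (show Nat.find hP - 1 < Nat.find hP by omega)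
      have hk'm : Nat.find hP - 1 ≤ m := by omega
      have hlt : js (Nat.find hP - 1) < i := by
        by_contra hc
        push_neg at hc
        exact hnk' ⟨hk'm, hc⟩
      have hs := hstep (Nat.find hP - 1) (by omega)
      rw [show Nat.find hP - 1 + 1 = Nat.find hP by omega] at hs
      have := abs_le.mp hs
      omega
  have hdk := hjsd _ hk0m
  have hji : dist (γ (js (Nat.find hP))) (γ i) ≤ K * (Δ:ℝ) + K := by
    have hqu := (hax.1 (js (Nat.find hP)) i).2
    have habsZ : |js (Nat.find hP) - i| ≤ Δ := by
      rw [abs_of_nonneg (by omega)]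
      omega
    have habs : |((js (Nat.find hP) : ℝ)) - (i:ℝ)| ≤ (Δ:ℝ) := by
      have : ((|js (Nat.find hP) - i| : ℤ) : ℝ) ≤ (Δ:ℝ) := by exact_mod_cast habsZ
      rw [Int.cast_abs, Int.cast_sub] at this
      exact this
    nlinarith [abs_nonneg (((js (Nat.find hP) : ℝ)) - (i:ℝ))]
  set t := T (Nat.find hP) with ht
  have htmem := hTmem _ hk0m
  have hd1 : dist (γ 0) (f t) = t := by
    rw [← hf0, hisog 0 ⟨le_refl 0, hL0⟩ t htmem, zero_sub, abs_neg, abs_of_nonneg htmem.1]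
  have hd2 : dist (f t) (γ n) = L - t := by
    rw [← hfL, hisog t htmem L ⟨hL0, le_refl L⟩, abs_of_nonpos (by linarith [htmem.2])]
    ring
  have hb1 : dist (γ 0) (γ i) ≤ t + (5*K + (K*(Δ:ℝ) + K)) := by
    have htri := dist_triangle4 (γ 0) (f t) (γ (js (Nat.find hP))) (γ i)
    rw [hd1] at htri
    linarith
  have hb2 : dist (γ i) (γ n) ≤ (L - t) + (5*K + (K*(Δ:ℝ) + K)) := by
    have htri := dist_triangle4 (γ i) (γ (js (Nat.find hP))) (f t) (γ n)
    rw [hd2] at htri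
    have e1 : dist (γ i) (γ (js (Nat.find hP))) = dist (γ (js (Nat.find hP))) (γ i) :=
      dist_comm _ _
    have e2 : dist (γ (js (Nat.find hP))) (f t) = dist (f t) (γ (js (Nat.find hP))) :=
      dist_comm _ _
    linarith
  have hqin : ((n:ℝ) - (i:ℝ))/K - K ≤ dist (γ i) (γ n) := by
    have hq := (hax.1 i n).1
    have hcast : (i:ℝ) ≤ (n:ℝ) := by exact_mod_cast hin
    rwa [abs_of_nonpos (by linarith), neg_sub] at hq
  linarith

end Aux

/-- Lemma 7.2 (discreteness of the length spectrum of a contracting isometry):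
windows of fixed width contain a uniformly bounded number of orbit-point norms. -/
theorem contracting_length_spectrum
    {G X : Type*} [Group G] [MetricSpace X] [MulAction G X]
    (o : X) (hgeo : IsGeodesicSpace X)
    (hiso : ∀ g : G, Isometry fun x : X => g • x)
    (g : G) (hg : IsContractingIsom o g) :
    ∀ W : ℝ, 0 < W → ∃ N : ℕ, ∀ a : ℝ,
      {i : ℤ | 0 < i ∧ a ≤ dist o (g ^ i • o) ∧ dist o (g ^ i • o) ≤ a + W}.encard ≤
        (N : ℕ∞) := by
  obtain ⟨K, hK, hax⟩ := hg
  intro W hW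
  have hKpos : (0:ℝ) < K := lt_trans one_pos hK
  have hΔ0 : (0:ℝ) ≤ ((⌈K*(11*K+1)⌉ : ℤ) : ℝ) := by
    have : (0:ℤ) ≤ ⌈K*(11*K+1)⌉ := Int.ceil_nonneg (by positivity)
    exact_mod_cast this
  set C : ℝ := 13*K + 2*K*((⌈K*(11*K+1)⌉ : ℤ) : ℝ) with hC
  have hC0 : 0 ≤ C := by
    rw [hC]
    nlinarith
  set Mz : ℤ := ⌈K*(W + C)⌉ with hMz
  have hMz0 : (0:ℤ) ≤ Mz := Int.ceil_nonneg (by positivity)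
  refine ⟨(2*Mz+1).toNat, fun a => ?_⟩
  set S := {i : ℤ | 0 < i ∧ a ≤ dist o (g ^ i • o) ∧ dist o (g ^ i • o) ≤ a + W} with hS
  rcases S.eq_empty_or_nonempty with h | ⟨i0, hi0⟩
  · rw [h]
    simp
  · have ho : (g : G) ^ (0:ℤ) • o = o := by simp
    have key : ∀ p q : ℤ, p ∈ S → q ∈ S → p ≤ q → q - p ≤ Mz := by
      intro p q hp hq hpq
      have hs := superadd hK hax hgeo p q hp.1.le hpq
      simp only [ho] at hs
      have hp2 := hp.2.1
      have hq2 := hq.2.2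
      have hdiv : ((q:ℝ) - (p:ℝ))/K ≤ W + C := by
        rw [← hC] at hs
        linarith
      rw [div_le_iff₀ hKpos] at hdiv
      have hle : ((q - p : ℤ) : ℝ) ≤ (Mz:ℝ) := by
        push_cast
        have := Int.le_ceil (K*(W + C))
        rw [← hMz] at this
        nlinarith
      exact_mod_cast hle
    have hsub : S ⊆ Set.Icc (i0 - Mz) (i0 + Mz) := by
      intro i hi
      constructor
      · rcases le_total i i0 with h' | h'
        · have := key i i0 hi hi0 h'
          omega
        · omega
      · rcases le_total i0 i with h' | h'
        · have := key i0 i hi0 hi h'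
          omega
        · omega
    calc S.encard ≤ (Set.Icc (i0 - Mz) (i0 + Mz)).encard := Set.encard_le_encard hsub
    _ = (((2*Mz+1).toNat : ℕ) : ℕ∞) := by
      rw [← Finset.coe_Icc, Set.encard_coe_eq_coe_finsetCard, Int.card_Icc]
      congr 1
      omega
end

section
/- Let X be a geodesic metric space with basepoint o, let G be a countable group acting on X by isometries, and let g ∈ G be a WPD contracting isometry. Define the elementary closure E(g) := {h ∈ G : the Hausdorff distance between the sets {h gⁿ·o : n ∈ ℤ} and {gⁿ·o : n ∈ ℤ} is finite}. Then E(g) is contained in finitely many left cosets of the cyclic subgroup ⟨g⟩; in particular, E(g) is a subgroup of G in which ⟨g⟩ has finite index. -/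
open Filter Topology Pointwise

/-- `g` is WPD: for each `K ≥ 0` there is `N > 0` so that the coarse stabilizer of
`(o, g^N o)` is finite. -/
def IsWPD {G X : Type*} [Group G] [MetricSpace X] [MulAction G X]
    (o : X) (g : G) : Prop :=
  ∀ K : ℝ, 0 ≤ K → ∃ N : ℕ, 0 < N ∧
    {h : G | dist o (h • o) ≤ K ∧ dist ((g ^ N) • o) ((h * g ^ N) • o) ≤ K}.Finite

/-- The elementary closure of `g`: elements whose translate of the `g`-orbit stays at
finite Hausdorff distance from the orbit. -/
def elmClosure {G X : Type*} [Group G] [MetricSpace X] [MulAction G X]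
    (o : X) (g : G) : Set G :=
  {h : G | EMetric.hausdorffEdist
      (Set.range fun n : ℤ => (h * g ^ n) • o)
      (Set.range fun n : ℤ => g ^ n • o) ≠ ⊤}

/-!
Fix a `K`-contracting orbit `γ i = g ^ i • o`. Contraction makes `γ` Morse: the part of `γ` between
two of its points stays close to any geodesic joining them, so `γ` is almost additive. A geodesic
between two far-apart points of a translate `h • γ`, `h ∈ E(g)`, passes close to its midpoint and
can leave the `K`-neighbourhood of `γ` only for a bounded time; hence `h • γ` lies in a
neighbourhood of `γ` whose size depends only on `K`, and every coset `h ⟨g⟩ ⊆ E(g)` has a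
representative moving `o` a bounded amount. Such a representative sends `g ^ N • o` close to
`g ^ N • o` or to `g ^ (-N) • o`. WPD makes the first kind finite, and two elements of the second
kind differ by an element of the finite WPD set.
-/

open Metric Set

lemma exists_Ioo_gap {P Q : Set ℝ} (hP : IsClosed P) (hQ : IsClosed Q) {a b : ℝ}
    (ha : a ∈ P) (hb : b ∈ Q) (hab : a ≤ b) :
    ∃ s ∈ P, ∃ u ∈ Q, a ≤ s ∧ s ≤ u ∧ u ≤ b ∧ ∀ r ∈ Ioo s u, r ∉ P ∧ r ∉ Q := by
  have hP' : sSup (P ∩ Icc a b) ∈ P ∩ Icc a b :=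
    (hP.inter isClosed_Icc).csSup_mem ⟨a, ha, le_rfl, hab⟩ ⟨b, fun r hr => hr.2.2⟩
  set s := sSup (P ∩ Icc a b)
  have hQ' : sInf (Q ∩ Icc s b) ∈ Q ∩ Icc s b :=
    (hQ.inter isClosed_Icc).csInf_mem ⟨b, hb, hP'.2.2, le_rfl⟩ ⟨s, fun r hr => hr.2.1⟩
  refine ⟨s, hP'.1, _, hQ'.1, hP'.2.1, hQ'.2.1, hQ'.2.2, fun r ⟨hsr, hru⟩ =>
    ⟨fun hr => hsr.not_ge ?_, fun hr => hru.not_ge ?_⟩⟩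
  · exact le_csSup ⟨b, fun r hr => hr.2.2⟩ ⟨hr, hP'.2.1.trans hsr.le, hru.le.trans hQ'.2.2⟩
  · exact csInf_le ⟨s, fun r hr => hr.2.1⟩ ⟨hr, hsr.le, hru.le.trans hQ'.2.2⟩

namespace IsGeodesicSegment

variable {X : Type*} [MetricSpace X] {f : ℝ → X} {x y : X}

lemma dist_eq (hf : IsGeodesicSegment f x y) {s t : ℝ} (hs : s ∈ Icc 0 (dist x y))
    (ht : t ∈ Icc 0 (dist x y)) : dist (f s) (f t) = |s - t| :=
  hf.2.2 s hs t ht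

lemma continuousOn (hf : IsGeodesicSegment f x y) : ContinuousOn f (Icc 0 (dist x y)) :=
  (LipschitzOnWith.of_dist_le' (K := 1) fun s hs t ht => by
    rw [hf.dist_eq hs ht, one_mul, Real.dist_eq]).continuousOn

lemma isClosed_infDist_le (hf : IsGeodesicSegment f x y) (A : Set X) (c : ℝ) {a b : ℝ}
    (ha : 0 ≤ a) (hb : b ≤ dist x y) : IsClosed {r ∈ Icc a b | infDist (f r) A ≤ c} :=
  ((continuous_infDist_pt A).comp_continuousOn (hf.continuousOn.mono (Icc_subset_Icc ha hb))
    ).preimage_isClosed_of_isClosed isClosed_Icc isClosed_Iic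

lemma isClosed_le_infDist (hf : IsGeodesicSegment f x y) (A : Set X) (c : ℝ) {a b : ℝ}
    (ha : 0 ≤ a) (hb : b ≤ dist x y) : IsClosed {r ∈ Icc a b | c ≤ infDist (f r) A} :=
  ((continuous_infDist_pt A).comp_continuousOn (hf.continuousOn.mono (Icc_subset_Icc ha hb))
    ).preimage_isClosed_of_isClosed isClosed_Icc isClosed_Ici

lemma restrict (hf : IsGeodesicSegment f x y) {s u : ℝ} (hs : 0 ≤ s) (hsu : s ≤ u)
    (hu : u ≤ dist x y) : IsGeodesicSegment (fun r => f (s + r)) (f s) (f u) := by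
  have hd : dist (f s) (f u) = u - s := by
    rw [hf.dist_eq ⟨hs, hsu.trans hu⟩ ⟨hs.trans hsu, hu⟩, abs_of_nonpos (by linarith)]; ring
  refine ⟨by simp, by simp [hd], fun a ha b hb => ?_⟩
  rw [hd] at ha hb
  rw [hf.dist_eq ⟨by linarith [ha.1], by linarith [ha.2]⟩
    ⟨by linarith [hb.1], by linarith [hb.2]⟩]
  ring_nf

end IsGeodesicSegment

section Axis

variable {X : Type*} [MetricSpace X] {K : ℝ} {δ : ℤ → X} {f : ℝ → X} {x y : X}

lemma IsQuasigeodesicZ.abs_sub_le (hK : 0 < K) (hδ : IsQuasigeodesicZ K δ) (i j : ℤ) :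
    |(i : ℝ) - j| ≤ K * (dist (δ i) (δ j) + K) := by
  have h := (hδ i j).1
  rw [div_sub' hK.ne', div_le_iff₀ hK] at h
  linarith

lemma IsQuasigeodesicZ.dist_le_of_le_of_le (hK : 0 < K) (hδ : IsQuasigeodesicZ K δ)
    {m j m' : ℤ} (hmj : m ≤ j) (hjm' : j ≤ m') :
    dist (δ j) (δ m) ≤ K * (K * (dist (δ m') (δ m) + K)) + K := by
  have hmj' : (m : ℝ) ≤ j := by exact_mod_cast hmj
  have hjm'' : (j : ℝ) ≤ m' := by exact_mod_cast hjm'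
  refine (hδ j m).2.trans ?_
  gcongr
  refine le_trans ?_ (hδ.abs_sub_le hK m' m)
  rw [abs_of_nonneg (by linarith), abs_of_nonneg (by linarith)]
  linarith

lemma IsQuasigeodesicZ.exists_dist_eq_infDist (hK : 0 < K) (hδ : IsQuasigeodesicZ K δ)
    {S : Set ℤ} (hS : S.Nonempty) (x : X) : ∃ m ∈ S, dist x (δ m) = infDist x (δ '' S) := by
  obtain ⟨s₀, hs₀⟩ := hS
  set ρ := dist x (δ s₀)
  -- a minimizer lies among the finitely many indices whose points are at most `ρ` from `x`
  set F := {m ∈ S | dist x (δ m) ≤ ρ}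
  have hF : F.Finite := by
    refine ((isCompact_closedBall s₀ (K * (2 * ρ + K))).finite
      (isDiscrete_iff_discreteTopology.2 inferInstance)).subset fun m hm => ?_
    rw [mem_closedBall, Int.dist_eq]
    refine (hδ.abs_sub_le hK m s₀).trans (mul_le_mul_of_nonneg_left ?_ hK.le)
    linarith [dist_triangle_left (δ m) (δ s₀) x, hm.2]
  obtain ⟨m, hmF, hmin⟩ :=
    F.exists_min_image (fun m => dist x (δ m)) hF ⟨s₀, hs₀, le_rfl⟩
  refine ⟨m, hmF.1, le_antisymm ((le_infDist ⟨_, mem_image_of_mem δ hs₀⟩).2 ?_)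
    (infDist_le_dist_of_mem (mem_image_of_mem δ hmF.1))⟩
  rintro _ ⟨b, hb, rfl⟩
  by_cases hbρ : dist x (δ b) ≤ ρ
  · exact hmin b ⟨hb, hbρ⟩
  · exact hmF.2.trans (not_le.1 hbρ).le

lemma IsQuasigeodesicZ.exists_dist_eq_infDist_range (hK : 0 < K) (hδ : IsQuasigeodesicZ K δ)
    (x : X) : ∃ m, dist x (δ m) = infDist x (range δ) := by
  simpa [image_univ] using hδ.exists_dist_eq_infDist hK univ_nonempty x

lemma IsContractingAxisZ.dist_lt_of_mem_projSet (hδ : IsContractingAxisZ K δ)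
    (hf : IsGeodesicSegment f x y)
    (hfar : ∀ t ∈ Icc 0 (dist x y), K ≤ infDist (f t) (range δ)) {a b : X}
    (ha : a ∈ projSet (range δ) x) (hb : b ∈ projSet (range δ) y) : dist a b < K := by
  have hmem : ∀ t ∈ Icc 0 (dist x y), projSet (range δ) (f t) ⊆
      projSetOf (range δ) (f '' Icc 0 (dist x y)) :=
    fun t ht => subset_biUnion_of_mem (u := projSet (range δ)) (mem_image_of_mem f ht)
  have hx := hmem 0 ⟨le_rfl, dist_nonneg⟩ (hf.1 ▸ ha)
  have hy := hmem _ ⟨dist_nonneg, le_rfl⟩ (hf.2.1 ▸ hb)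
  have := (edist_le_ediam_of_mem hx hy).trans_lt (hδ.2 f x y hf hfar)
  rw [edist_dist, ENNReal.ofReal_lt_ofReal_iff'] at this
  exact this.1

lemma IsContractingAxisZ.sub_le_infDist_add_infDist (hK : 0 < K) (hδ : IsContractingAxisZ K δ)
    (hf : IsGeodesicSegment f x y) {s u : ℝ} (hs : 0 ≤ s) (hsu : s ≤ u) (hu : u ≤ dist x y)
    (hfar : ∀ r ∈ Ioo s u, K ≤ infDist (f r) (range δ)) :
    u - s ≤ infDist (f s) (range δ) + infDist (f u) (range δ) + K := by
  rcases hsu.eq_or_lt with rfl | hlt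
  · linarith [infDist_nonneg (x := f s) (s := range δ)]
  have hfar' : ∀ r ∈ Icc s u, K ≤ infDist (f r) (range δ) := by
    rw [← closure_Ioo hlt.ne]
    intro r hr
    have hsub : Ioo s u ⊆ {r ∈ Icc s u | K ≤ infDist (f r) (range δ)} :=
      fun r hr => ⟨Ioo_subset_Icc_self hr, hfar r hr⟩
    exact (closure_minimal hsub (hf.isClosed_le_infDist (range δ) K hs hu) hr).2
  have hd : dist (f s) (f u) = u - s := by
    rw [hf.dist_eq ⟨hs, hsu.trans hu⟩ ⟨hs.trans hsu, hu⟩, abs_of_nonpos (by linarith)]; ring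
  obtain ⟨a, ha⟩ := hδ.1.exists_dist_eq_infDist_range hK (f s)
  obtain ⟨b, hb⟩ := hδ.1.exists_dist_eq_infDist_range hK (f u)
  have hab : dist (δ a) (δ b) < K := by
    refine hδ.dist_lt_of_mem_projSet (hf.restrict hs hsu hu) (fun t ht => hfar' _ ?_)
      ⟨mem_range_self a, ha⟩ ⟨mem_range_self b, hb⟩
    rw [hd] at ht
    constructor <;> linarith [ht.1, ht.2]
  calc u - s = dist (f s) (f u) := hd.symm
    _ ≤ dist (f s) (δ a) + dist (δ a) (δ b) + dist (δ b) (f u) := dist_triangle4 _ _ _ _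
    _ ≤ _ := by rw [dist_comm (δ b)]; linarith

lemma IsContractingAxisZ.exists_infDist_lt (hK : 0 < K) (hδ : IsContractingAxisZ K δ)
    (hf : IsGeodesicSegment f x y) {s u : ℝ} (hs : 0 ≤ s) (hsu : s ≤ u) (hu : u ≤ dist x y)
    (hlong : infDist (f s) (range δ) + infDist (f u) (range δ) + K < u - s) :
    ∃ r ∈ Ioo s u, infDist (f r) (range δ) < K := by
  by_contra! hfar
  exact hlong.not_ge (hδ.sub_le_infDist_add_infDist hK hf hs hsu hu hfar)

lemma IsContractingAxisZ.infDist_le_of_mem_Icc (hK : 0 < K) (hδ : IsContractingAxisZ K δ)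
    (hf : IsGeodesicSegment f x y) {s t u : ℝ} (hs : 0 ≤ s) (hst : s ≤ t) (htu : t ≤ u)
    (hu : u ≤ dist x y) (hsK : infDist (f s) (range δ) ≤ K)
    (huK : infDist (f u) (range δ) ≤ K) : infDist (f t) (range δ) ≤ 4 * K := by
  obtain ⟨s', ⟨hs'I, hs'K⟩, u', ⟨hu'I, hu'K⟩, -, hs'u', -, hgap⟩ := exists_Ioo_gap
    (hf.isClosed_infDist_le (range δ) K le_rfl (htu.trans hu))
    (hf.isClosed_infDist_le (range δ) K (hs.trans hst) le_rfl)
    ⟨⟨hs, hst⟩, hsK⟩ ⟨⟨htu, hu⟩, huK⟩ (hst.trans htu)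
  have hlen : u' - s' ≤ infDist (f s') (range δ) + infDist (f u') (range δ) + K := by
    refine hδ.sub_le_infDist_add_infDist hK hf hs'I.1 hs'u' hu'I.2 fun r hr => ?_
    by_contra! hlt
    rcases le_total r t with hrt | hrt
    · exact (hgap r hr).1 ⟨⟨hs'I.1.trans hr.1.le, hrt⟩, hlt.le⟩
    · exact (hgap r hr).2 ⟨⟨hrt, hr.2.le.trans hu'I.2⟩, hlt.le⟩
  calc infDist (f t) (range δ) ≤ infDist (f s') (range δ) + dist (f t) (f s') :=
        infDist_le_infDist_add_dist
    _ = infDist (f s') (range δ) + (t - s') := by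
        rw [hf.dist_eq ⟨hs.trans hst, htu.trans hu⟩ ⟨hs'I.1, hs'I.2.trans (htu.trans hu)⟩,
          abs_of_nonneg (by linarith [hs'I.2])]
    _ ≤ 4 * K := by linarith [hs'I.2, hu'I.1]

lemma le_infDist_range_of_le_of_le {z : X} {c : ℝ} {j : ℤ} (hle : c ≤ infDist z (δ '' Iic j))
    (hge : c ≤ infDist z (δ '' Ici j)) : c ≤ infDist z (range δ) := by
  refine (le_infDist (range_nonempty δ)).2 ?_
  rintro _ ⟨n, rfl⟩
  rcases le_total n j with hn | hn
  · exact hle.trans (infDist_le_dist_of_mem (mem_image_of_mem δ (show n ∈ Iic j from hn)))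
  · exact hge.trans (infDist_le_dist_of_mem (mem_image_of_mem δ (show n ∈ Ici j from hn)))

noncomputable def morseBound (K : ℝ) : ℝ := 6 * K ^ 3 + 2 * K

lemma IsContractingAxisZ.exists_dist_le_morseBound (hK : 0 < K) (hδ : IsContractingAxisZ K δ)
    {i j k : ℤ} (hij : i ≤ j) (hjk : j ≤ k) (hf : IsGeodesicSegment f (δ i) (δ k)) :
    ∃ t ∈ Icc 0 (dist (δ i) (δ k)), dist (δ j) (f t) ≤ morseBound K := by
  -- `f s` is `K`-close to the axis before `j` and `f u` to the axis after `j`, while `f` is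
  -- `K`-far from the whole axis in between, so `u - s ≤ 3 K`
  obtain ⟨s, ⟨hsI, hsK⟩, u, ⟨huI, huK⟩, -, hsu, -, hgap⟩ := exists_Ioo_gap
    (hf.isClosed_infDist_le (δ '' Iic j) K le_rfl le_rfl)
    (hf.isClosed_infDist_le (δ '' Ici j) K le_rfl le_rfl)
    ⟨⟨le_rfl, dist_nonneg⟩, by
      rw [hf.1, infDist_zero_of_mem (mem_image_of_mem δ (show i ∈ Iic j from hij))]
      exact hK.le⟩
    ⟨⟨dist_nonneg, le_rfl⟩, by
      rw [hf.2.1, infDist_zero_of_mem (mem_image_of_mem δ (show k ∈ Ici j from hjk))]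
      exact hK.le⟩
    dist_nonneg
  obtain ⟨m, hmj, hm⟩ := hδ.1.exists_dist_eq_infDist hK nonempty_Iic (f s)
  obtain ⟨m', hjm', hm'⟩ := hδ.1.exists_dist_eq_infDist hK nonempty_Ici (f u)
  have hfar : ∀ r ∈ Ioo s u, K ≤ infDist (f r) (range δ) := by
    intro r hr
    have hrI : r ∈ Icc 0 (dist (δ i) (δ k)) := ⟨hsI.1.trans hr.1.le, hr.2.le.trans huI.2⟩
    exact le_infDist_range_of_le_of_le (j := j) (not_le.1 fun h => (hgap r hr).1 ⟨hrI, h⟩).le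
      (not_le.1 fun h => (hgap r hr).2 ⟨hrI, h⟩).le
  have hlen := hδ.sub_le_infDist_add_infDist hK hf hsI.1 hsu huI.2 hfar
  have hs : infDist (f s) (range δ) ≤ K :=
    (infDist_le_dist_of_mem (mem_range_self m)).trans (hm ▸ hsK)
  have hu : infDist (f u) (range δ) ≤ K :=
    (infDist_le_dist_of_mem (mem_range_self m')).trans (hm' ▸ huK)
  have hmm' : dist (δ m') (δ m) ≤ 5 * K := by
    calc dist (δ m') (δ m) ≤ dist (δ m') (f u) + dist (f u) (f s) + dist (f s) (δ m) :=
          dist_triangle4 _ _ _ _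
      _ ≤ 5 * K := by
        rw [dist_comm (δ m'), hf.dist_eq huI hsI, abs_of_nonneg (by linarith)]
        linarith
  refine ⟨s, hsI, ?_⟩
  calc dist (δ j) (f s) ≤ dist (δ j) (δ m) + dist (δ m) (f s) := dist_triangle _ _ _
    _ ≤ (K * (K * (5 * K + K)) + K) + K := by
        gcongr
        · exact hδ.1.dist_le_of_le_of_le hK hmj hjm' |>.trans (by gcongr)
        · rw [dist_comm, hm]; exact hsK
    _ = morseBound K := by rw [morseBound]; ring

lemma IsContractingAxisZ.dist_add_dist_le (hgeo : IsGeodesicSpace X) (hK : 0 < K)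
    (hδ : IsContractingAxisZ K δ) {i j k : ℤ} (hij : i ≤ j) (hjk : j ≤ k) :
    dist (δ i) (δ j) + dist (δ j) (δ k) ≤ dist (δ i) (δ k) + 2 * morseBound K := by
  obtain ⟨f, hf⟩ := hgeo (δ i) (δ k)
  obtain ⟨t, ht, hjt⟩ := hδ.exists_dist_le_morseBound hK hij hjk hf
  have hit : dist (δ i) (f t) = t := by
    rw [← hf.1, hf.dist_eq ⟨le_rfl, dist_nonneg⟩ ht, zero_sub, abs_neg, abs_of_nonneg ht.1]
  have htk : dist (f t) (δ k) = dist (δ i) (δ k) - t := by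
    conv_lhs => rw [← hf.2.1]
    rw [hf.dist_eq ht ⟨dist_nonneg, le_rfl⟩, abs_of_nonpos (by linarith [ht.2])]
    ring
  linarith [dist_triangle (δ i) (f t) (δ j), dist_triangle (δ j) (f t) (δ k),
    dist_comm (δ j) (f t)]

lemma dist_le_abs_sub_dist_add {C : ℝ} (hadd : ∀ i j k : ℤ, i ≤ j → j ≤ k →
      dist (δ i) (δ j) + dist (δ j) (δ k) ≤ dist (δ i) (δ k) + C)
    {a p q : ℤ} (hpq : a ≤ p ∧ a ≤ q ∨ p ≤ a ∧ q ≤ a) :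
    dist (δ p) (δ q) ≤ |dist (δ a) (δ p) - dist (δ a) (δ q)| + C := by
  wlog hle : p ≤ q generalizing p q
  · rw [dist_comm, abs_sub_comm]
    exact this (by tauto) (le_of_not_ge hle)
  rcases hpq with ⟨hap, -⟩ | ⟨-, hqa⟩
  · linarith [hadd a p q hap hle, neg_abs_le (dist (δ a) (δ p) - dist (δ a) (δ q))]
  · linarith [hadd p q a hle hqa, le_abs_self (dist (δ a) (δ p) - dist (δ a) (δ q)),
      dist_comm (δ a) (δ p), dist_comm (δ a) (δ q)]

lemma projSet_image {Y : Type*} [MetricSpace Y] (e : X ≃ᵢ Y) (A : Set X) (x : X) :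
    projSet (e '' A) (e x) = e '' projSet A x := by
  ext a
  obtain ⟨b, rfl⟩ := e.surjective a
  simp [projSet, e.dist_eq, infDist_image e.isometry, e.injective.mem_set_image]

lemma projSetOf_image {Y : Type*} [MetricSpace Y] (e : X ≃ᵢ Y) (A B : Set X) :
    projSetOf (e '' A) (e '' B) = e '' projSetOf A B := by
  simp only [projSetOf, biUnion_image, image_iUnion₂, projSet_image]

lemma IsContractingAxisZ.isometryEquiv_comp {Y : Type*} [MetricSpace Y] (e : X ≃ᵢ Y)
    (hδ : IsContractingAxisZ K δ) : IsContractingAxisZ K (e ∘ δ) := by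
  refine ⟨fun s t => by simpa [e.dist_eq] using hδ.1 s t, fun f x y hf hfar => ?_⟩
  have hd : dist (e.symm x) (e.symm y) = dist x y := e.symm.dist_eq x y
  have hf' : IsGeodesicSegment (e.symm ∘ f) (e.symm x) (e.symm y) := by
    refine ⟨by simp [hf.1], by simp [hd, hf.2.1], fun s hs t ht => ?_⟩
    rw [hd] at hs ht
    simp [e.symm.dist_eq, hf.dist_eq hs ht]
  have hrange : range (e ∘ δ) = e '' range δ := range_comp e δ
  have himage : f '' Icc 0 (dist x y) = e '' ((e.symm ∘ f) '' Icc 0 (dist x y)) := by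
    rw [← image_comp]; simp
  have hfar' : ∀ t ∈ Icc 0 (dist (e.symm x) (e.symm y)),
      K ≤ infDist ((e.symm ∘ f) t) (range δ) := by
    intro t ht
    rw [hd] at ht
    simpa [hrange, ← infDist_image e.isometry] using hfar t ht
  rw [hrange, himage, projSetOf_image]
  have := hδ.2 _ _ _ hf' hfar'
  rw [hd] at this
  exact (e.isometry.ediam_image _).trans_lt this

lemma IsContractingAxisZ.infDist_le_of_forall_infDist_le (hgeo : IsGeodesicSpace X)
    (hK : 0 < K) (hδ : IsContractingAxisZ K δ) {δ' : ℤ → X} (hδ' : IsContractingAxisZ K δ')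
    {R : ℝ} (hR : ∀ n, infDist (δ' n) (range δ) ≤ R) (n : ℤ) :
    infDist (δ' n) (range δ) ≤ 4 * K + morseBound K := by
  set C := morseBound K
  -- `δ' n` is `C`-close to a geodesic between `δ' (n ∓ L)`; for large `L` both halves of that
  -- geodesic are too long to avoid the `K`-neighbourhood of `δ`
  obtain ⟨L, hL⟩ := exists_nat_gt (K * (2 * R + 2 * C + 2 * K))
  have hLK : 2 * R + 2 * C + 2 * K < L / K := by rw [lt_div_iff₀ hK]; linarith
  have hsep : ∀ m : ℤ, |(m : ℝ) - n| = L → L / K - K ≤ dist (δ' m) (δ' n) := fun m hm =>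
    hm ▸ (hδ'.1 m n).1
  obtain ⟨f, hf⟩ := hgeo (δ' (n - L)) (δ' (n + L))
  set D := dist (δ' (n - L)) (δ' (n + L))
  obtain ⟨t, ht, htC⟩ :=
    hδ'.exists_dist_le_morseBound hK (by omega : n - L ≤ n) (by omega) hf
  have hft : infDist (f t) (range δ) ≤ R + C :=
    infDist_le_infDist_add_dist.trans (add_le_add (hR n) (dist_comm (δ' n) (f t) ▸ htC))
  obtain ⟨s, hs, hsK⟩ := hδ.exists_infDist_lt hK hf le_rfl ht.1 ht.2 (by
    have h0 := hsep (n - L) (by push_cast; simp)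
    have h1 : dist (f 0) (f t) = t := by
      rw [hf.dist_eq ⟨le_rfl, dist_nonneg⟩ ht, zero_sub, abs_neg, abs_of_nonneg ht.1]
    have h2 : infDist (f 0) (range δ) ≤ R := hf.1 ▸ hR (n - L)
    rw [← hf.1] at h0
    linarith [dist_triangle (f 0) (f t) (δ' n), dist_comm (δ' n) (f t)])
  obtain ⟨u, hu, huK⟩ := hδ.exists_infDist_lt hK hf ht.1 ht.2 le_rfl (by
    have h0 := hsep (n + L) (by push_cast; simp)
    have h1 : dist (f t) (f D) = D - t := by
      rw [hf.dist_eq ht ⟨dist_nonneg, le_rfl⟩, abs_of_nonpos (by linarith [ht.2])]; ring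
    have h2 : infDist (f D) (range δ) ≤ R := by rw [hf.2.1]; exact hR (n + L)
    rw [← hf.2.1] at h0
    linarith [dist_triangle (f D) (f t) (δ' n), dist_comm (f t) (f D), dist_comm (δ' n) (f t)])
  have := hδ.infDist_le_of_mem_Icc hK hf hs.1.le hs.2.le hu.1.le hu.2.le hsK.le huK.le
  linarith [infDist_le_infDist_add_dist (x := δ' n) (y := f t) (s := range δ)]

end Axis

section Action

variable {G X : Type*} [Group G] [MetricSpace X] [MulAction G X] {o : X} {g : G} {K : ℝ}

lemma Set.Finite.of_forall_inv_mul_mem {R W : Set G} (hW : W.Finite)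
    (h : ∀ a ∈ R, ∀ b ∈ R, a⁻¹ * b ∈ W) : R.Finite := by
  rcases R.eq_empty_or_nonempty with rfl | ⟨a, ha⟩
  · exact finite_empty
  · exact (hW.image (a * ·)).subset fun b hb =>
      ⟨a⁻¹ * b, h a ha b hb, mul_inv_cancel_left a b⟩

lemma Subgroup.index_subgroupOf_ne_zero_of_subset_biUnion {H K : Subgroup G} {S : Finset G}
    (hS : (H : Set G) ⊆ ⋃ s ∈ S, s • (K : Set G)) : (K.subgroupOf H).index ≠ 0 := by
  have : Finite (H ⧸ K.subgroupOf H) := by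
    rw [← Set.finite_univ_iff]
    refine (S.finite_toSet.biUnion fun s _ =>
      (?_ : ((QuotientGroup.mk : H → H ⧸ K.subgroupOf H) ''
        {a | (a : G) ∈ s • (K : Set G)}).Subsingleton).finite).subset ?_
    · rintro _ ⟨a, ⟨k, hk, hka⟩, rfl⟩ _ ⟨b, ⟨l, hl, hlb⟩, rfl⟩
      refine QuotientGroup.eq.2 (Subgroup.mem_subgroupOf.2 ?_)
      simp only [smul_eq_mul] at hka hlb
      simpa [← hka, ← hlb, mul_assoc] using K.mul_mem (K.inv_mem hk) hl
    · rintro q -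
      obtain ⟨a, rfl⟩ := QuotientGroup.mk_surjective q
      obtain ⟨s, hs, has⟩ := mem_iUnion₂.1 (hS a.2)
      exact mem_iUnion₂.2 ⟨s, hs, a, has, rfl⟩
  exact Subgroup.index_ne_zero_of_finite

lemma mem_elmClosure_iff {h : G} :
    h ∈ elmClosure o g ↔ hausdorffEDist (h • zorbit o g) (zorbit o g) ≠ ⊤ := by
  rw [zorbit, smul_set_range]
  simp only [← mul_smul]
  rfl

lemma zpow_mem_elmClosure (m : ℤ) : g ^ m ∈ elmClosure o g := by
  have : g ^ m • zorbit o g = zorbit o g := by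
    rw [zorbit, smul_set_range]
    simp only [smul_smul, ← zpow_add]
    exact (Equiv.addLeft m).surjective.range_comp fun n => g ^ n • o
  rw [mem_elmClosure_iff, this, hausdorffEDist_self]
  exact ENNReal.zero_ne_top

variable (hiso : ∀ h : G, Isometry fun x : X => h • x)
include hiso

lemma dist_inv_mul_smul (a b : G) (x y : X) :
    dist x ((a⁻¹ * b) • y) = dist (a • x) (b • y) := by
  rw [← (hiso a).dist_eq, smul_smul, mul_inv_cancel_left]

lemma hausdorffEDist_smul (h : G) (A B : Set X) :
    hausdorffEDist (h • A) (h • B) = hausdorffEDist A B := by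
  simpa only [← image_smul] using hausdorffEDist_image (hiso h)

def elmClosureSubgroup : Subgroup G where
  carrier := elmClosure o g
  one_mem' := by simpa using zpow_mem_elmClosure (o := o) (g := g) 0
  mul_mem' {a b} ha hb := by
    rw [mem_elmClosure_iff] at *
    refine ne_top_of_le_ne_top (ENNReal.add_ne_top.2 ⟨hb, ha⟩)
      ((hausdorffEDist_triangle (t := a • zorbit o g)).trans_eq ?_)
    rw [mul_smul, hausdorffEDist_smul hiso]
  inv_mem' {a} ha := by
    rw [mem_elmClosure_iff] at *
    rwa [← hausdorffEDist_smul hiso a, smul_inv_smul, hausdorffEDist_comm]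

lemma exists_dist_zpow_smul_le_of_mem_elmClosure (hgeo : IsGeodesicSpace X) (hK : 0 < K)
    (hg : IsContractingAxisZ K fun i : ℤ => g ^ i • o) {h : G} (hh : h ∈ elmClosure o g)
    (n : ℤ) : ∃ p : ℤ, dist ((h * g ^ n) • o) (g ^ p • o) ≤ 4 * K + morseBound K := by
  let e : X ≃ᵢ X := { MulAction.toPerm h with isometry_toFun := hiso h }
  have hδ' : IsContractingAxisZ K fun i : ℤ => (h * g ^ i) • o := by
    have : (fun i : ℤ => (h * g ^ i) • o) = e ∘ fun i : ℤ => g ^ i • o :=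
      funext fun i => mul_smul h (g ^ i) o
    exact this ▸ hg.isometryEquiv_comp e
  obtain ⟨p, hp⟩ := hg.1.exists_dist_eq_infDist_range hK ((h * g ^ n) • o)
  exact ⟨p, hp.trans_le (hg.infDist_le_of_forall_infDist_le hgeo hK hδ'
    (fun m => infDist_le_hausdorffDist_of_mem (mem_range_self m) hh) n)⟩

lemma exists_dist_mul_zpow_smul_le_of_mem_elmClosure (hgeo : IsGeodesicSpace X) (hK : 0 < K)
    (hg : IsContractingAxisZ K fun i : ℤ => g ^ i • o) {h : G} (hh : h ∈ elmClosure o g) :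
    ∃ m : ℤ, dist o ((h * g ^ m) • o) ≤ 4 * K + morseBound K := by
  obtain ⟨m, hm⟩ := exists_dist_zpow_smul_le_of_mem_elmClosure hiso hgeo hK hg
    ((elmClosureSubgroup hiso).inv_mem hh) 0
  have := dist_inv_mul_smul hiso h⁻¹ (g ^ m) o o
  rw [inv_inv] at this
  exact ⟨m, by simpa [this] using hm⟩

-- distances from `o` along an almost additive orbit determine orbit points up to the sign of
-- their index
lemma dist_mul_pow_smul_le_or {C D : ℝ} (hadd : ∀ i j k : ℤ, i ≤ j → j ≤ k →
      dist (g ^ i • o) (g ^ j • o) + dist (g ^ j • o) (g ^ k • o) ≤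
        dist (g ^ i • o) (g ^ k • o) + C)
    {h : G} (ho : dist o (h • o) ≤ D) (N : ℕ) {p : ℤ}
    (hp : dist ((h * g ^ N) • o) (g ^ p • o) ≤ D) :
    dist ((h * g ^ N) • o) (g ^ N • o) ≤ 3 * D + C ∨
      dist ((h * g ^ N) • o) ((g ^ N)⁻¹ • o) ≤ 3 * D + C := by
  have hγ0 : g ^ (0 : ℤ) • o = o := by simp
  have hN : dist o (g ^ N • o) = dist (h • o) ((h * g ^ N) • o) := by
    rw [mul_smul, (hiso h).dist_eq]
  have hNneg : dist o ((g ^ N)⁻¹ • o) = dist o (g ^ N • o) := by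
    rw [← (hiso (g ^ N)).dist_eq, smul_inv_smul, dist_comm]
  have hcmp : |dist o (g ^ p • o) - dist o (g ^ N • o)| ≤ 2 * D := by
    rw [abs_le]
    constructor <;> linarith [dist_triangle4 o (h • o) ((h * g ^ N) • o) (g ^ p • o),
      dist_triangle4 (h • o) o (g ^ p • o) ((h * g ^ N) • o), dist_comm o (h • o),
      dist_comm (g ^ p • o) ((h * g ^ N) • o)]
  rcases le_total 0 p with hp0 | hp0
  · left
    have := dist_le_abs_sub_dist_add hadd (a := 0) (q := N) (Or.inl ⟨hp0, N.cast_nonneg⟩)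
    simp only [hγ0, zpow_natCast] at this
    linarith [dist_triangle ((h * g ^ N) • o) (g ^ p • o) (g ^ N • o)]
  · right
    have := dist_le_abs_sub_dist_add hadd (a := 0) (q := -N) (Or.inr ⟨hp0, by simp⟩)
    simp only [hγ0, zpow_neg, zpow_natCast, hNneg] at this
    linarith [dist_triangle ((h * g ^ N) • o) (g ^ p • o) ((g ^ N)⁻¹ • o)]

lemma finite_setOf_mem_elmClosure_dist_le (hgeo : IsGeodesicSpace X) (hK : 0 < K)
    (hg : IsContractingAxisZ K fun i : ℤ => g ^ i • o) (hwpd : IsWPD o g) :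
    {h ∈ elmClosure o g | dist o (h • o) ≤ 4 * K + morseBound K}.Finite := by
  set D := 4 * K + morseBound K
  set c := 3 * D + 2 * morseBound K
  have hM : 0 ≤ morseBound K := by unfold morseBound; positivity
  have hc : D ≤ c := by linarith
  obtain ⟨N, -, hW⟩ := hwpd (2 * c) (by linarith)
  have hrev : {h : G | dist o (h • o) ≤ D ∧
      dist ((h * g ^ N) • o) ((g ^ N)⁻¹ • o) ≤ c}.Finite := by
    refine hW.of_forall_inv_mul_mem fun a ha b hb => ⟨?_, ?_⟩
    · rw [dist_inv_mul_smul hiso]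
      linarith [dist_triangle (a • o) o (b • o), dist_comm (a • o) o, ha.1, hb.1]
    · rw [mul_assoc, dist_inv_mul_smul hiso, ← mul_smul]
      linarith [dist_triangle ((a * g ^ N) • o) ((g ^ N)⁻¹ • o) ((b * g ^ N) • o),
        dist_comm ((b * g ^ N) • o) ((g ^ N)⁻¹ • o), ha.2, hb.2]
  refine (hW.union hrev).subset fun h ⟨hh, ho⟩ => ?_
  obtain ⟨p, hp⟩ := exists_dist_zpow_smul_le_of_mem_elmClosure hiso hgeo hK hg hh N
  rw [zpow_natCast] at hp
  rcases dist_mul_pow_smul_le_or hiso (fun i j k => hg.dist_add_dist_le hgeo hK) ho N hp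
    with h1 | h1
  · exact Or.inl ⟨by linarith, by rw [dist_comm]; linarith⟩
  · exact Or.inr ⟨ho, h1⟩

end Action

theorem elementary_closure_virtually_cyclic_general
    {G X : Type*} [Group G] [MetricSpace X] [MulAction G X]
    (o : X) (hgeo : IsGeodesicSpace X)
    (hiso : ∀ g : G, Isometry fun x : X => g • x)
    (g : G) (hg : IsContractingIsom o g) (hwpd : IsWPD o g) :
    (∃ S : Finset G, elmClosure o g ⊆ ⋃ s ∈ S, s • (Subgroup.zpowers g : Set G)) ∧
    ∃ H : Subgroup G, (H : Set G) = elmClosure o g ∧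
      ((Subgroup.zpowers g).subgroupOf H).index ≠ 0 := by
  obtain ⟨K, hK, hg⟩ := hg
  have hK0 : 0 < K := by linarith
  have hT := finite_setOf_mem_elmClosure_dist_le hiso hgeo hK0 hg hwpd
  have hcover : elmClosure o g ⊆ ⋃ s ∈ hT.toFinset, s • (Subgroup.zpowers g : Set G) := by
    intro h hh
    obtain ⟨m, hm⟩ := exists_dist_mul_zpow_smul_le_of_mem_elmClosure hiso hgeo hK0 hg hh
    refine mem_biUnion (x := h * g ^ m) (hT.mem_toFinset.2
      ⟨(elmClosureSubgroup hiso).mul_mem hh (zpow_mem_elmClosure m), hm⟩) ?_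
    simp [mem_leftCoset_iff, mul_assoc]
  exact ⟨⟨_, hcover⟩, elmClosureSubgroup hiso, rfl,
    Subgroup.index_subgroupOf_ne_zero_of_subset_biUnion hcover⟩

/-- Lemma 7.3: for a WPD contracting isometry `g`, the elementary closure `E(g)` is
covered by finitely many left cosets of `⟨g⟩`, and is a subgroup containing `⟨g⟩`
with finite index. -/
theorem elementary_closure_virtually_cyclic
    {G X : Type*} [Group G] [Countable G] [MetricSpace X] [MulAction G X]
    (o : X) (hgeo : IsGeodesicSpace X)
    (hiso : ∀ g : G, Isometry fun x : X => g • x)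
    (g : G) (hg : IsContractingIsom o g) (hwpd : IsWPD o g) :
    (∃ S : Finset G, elmClosure o g ⊆ ⋃ s ∈ S, s • (Subgroup.zpowers g : Set G)) ∧
    ∃ H : Subgroup G, (H : Set G) = elmClosure o g ∧
      ((Subgroup.zpowers g).subgroupOf H).index ≠ 0 :=
  elementary_closure_virtually_cyclic_general o hgeo hiso g hg hwpd
end

section
/- Let G be a countable set, let 0 < ε < 1, and let f and p be probability mass functions on G (∑_g f(g) = ∑_g p(g) = 1) such that (1−ε)·f(g) ≤ p(g) ≤ (1+ε)·f(g) for every g ∈ G and such that H(f) := −∑_g f(g) log f(g) < ∞. Then H(p) := −∑_g p(g) log p(g) satisfies H(p) ≥ (1−ε)·H(f) − 2ε. -/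
open Filter Topology

/-- Claim 7.1 (entropy comparison): if `(1−ε) f ≤ p ≤ (1+ε) f` pointwise, then
`H(p) ≥ (1−ε) H(f) − 2ε`. -/
theorem entropy_comparison
    {G : Type*} [Countable G] (ε : ℝ) (hε0 : 0 < ε) (hε1 : ε < 1)
    (f p : G → ℝ)
    (hf0 : ∀ g, 0 ≤ f g) (hp0 : ∀ g, 0 ≤ p g)
    (hfs : Summable f) (hps : Summable p)
    (hf1 : ∑' g : G, f g = 1) (hp1 : ∑' g : G, p g = 1)
    (hlow : ∀ g : G, (1 - ε) * f g ≤ p g)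
    (hup : ∀ g : G, p g ≤ (1 + ε) * f g)
    (hHf : Summable fun g : G => f g * Real.log (f g)) :
    (1 - ε) * (∑' g : G, -(f g * Real.log (f g))) - 2 * ε ≤
      ∑' g : G, -(p g * Real.log (p g)) := by
  have hε1' : (0:ℝ) < 1 - ε := by linarith
  have hpz : ∀ g, f g = 0 → p g = 0 := by
    intro g hfg
    have := hup g
    rw [hfg, mul_zero] at this
    exact le_antisymm this (hp0 g)
  have hfle1 : ∀ g, f g ≤ 1 := by
    intro g
    rw [← hf1]
    exact Summable.le_tsum hfs g fun i _ => hf0 i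
  set L : G → ℝ := fun g => (1 - ε) * (-(f g * Real.log (f g))) - ε * p g with hLdef
  set U : G → ℝ := fun g => (-Real.log (1 - ε)) * p g - (1 + ε) * (f g * Real.log (f g))
    with hUdef
  have hLle : ∀ g, L g ≤ -(p g * Real.log (p g)) := by
    intro g
    rcases eq_or_lt_of_le (hf0 g) with hfg | hfg
    · simp [hLdef, ← hfg, hpz g hfg.symm]
    · have hpg : 0 < p g := lt_of_lt_of_le (by positivity) (hlow g)
      have hlogp : Real.log (p g) ≤ Real.log (1 + ε) + Real.log (f g) := by
        have := Real.log_le_log hpg (hup g)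
        rwa [Real.log_mul (by positivity) hfg.ne'] at this
      have h1 : p g * Real.log (p g) ≤ p g * Real.log (1 + ε) + p g * Real.log (f g) := by
        nlinarith [hp0 g]
      have hlogf : Real.log (f g) ≤ 0 := Real.log_nonpos (hf0 g) (hfle1 g)
      have h2 : p g * Real.log (f g) ≤ (1 - ε) * f g * Real.log (f g) := by
        nlinarith [hlow g]
      have h3 : Real.log (1 + ε) ≤ ε := by
        have := Real.log_le_sub_one_of_pos (show (0:ℝ) < 1 + ε by linarith)
        linarith
      have h4 : p g * Real.log (1 + ε) ≤ ε * p g := by nlinarith [hp0 g]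
      simp only [hLdef]
      nlinarith
  have hUge : ∀ g, -(p g * Real.log (p g)) ≤ U g := by
    intro g
    rcases eq_or_lt_of_le (hf0 g) with hfg | hfg
    · simp [hUdef, ← hfg, hpz g hfg.symm]
    · have hpg : 0 < p g := lt_of_lt_of_le (by positivity) (hlow g)
      have hlogp : Real.log (1 - ε) + Real.log (f g) ≤ Real.log (p g) := by
        have := Real.log_le_log (by positivity) (hlow g)
        rwa [Real.log_mul (by positivity) hfg.ne'] at this
      have h1 : p g * Real.log (1 - ε) + p g * Real.log (f g) ≤ p g * Real.log (p g) := by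
        nlinarith [hp0 g]
      have hlogf : Real.log (f g) ≤ 0 := Real.log_nonpos (hf0 g) (hfle1 g)
      have h2 : (1 + ε) * f g * Real.log (f g) ≤ p g * Real.log (f g) := by
        nlinarith [hup g]
      have hlog1ε : Real.log (1 - ε) ≤ 0 := Real.log_nonpos (by linarith) (by linarith)
      have h4 : -Real.log (1 - ε) * p g ≥ -(p g * Real.log (1 - ε)) := by nlinarith [hp0 g]
      simp only [hUdef]
      nlinarith
  have hLsum : Summable L := (hHf.neg.mul_left (1 - ε)).sub (hps.mul_left ε)
  have hUsum : Summable U := (hps.mul_left (-Real.log (1 - ε))).sub (hHf.mul_left (1 + ε))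
  have husum : Summable fun g => -(p g * Real.log (p g)) := by
    have hdiff : Summable fun g => (-(p g * Real.log (p g))) - L g := by
      apply Summable.of_nonneg_of_le (fun g => by linarith [hLle g])
        (fun g => by linarith [hUge g]) (hUsum.sub hLsum)
    have := hdiff.add hLsum
    simpa using this
  have hle := Summable.tsum_le_tsum hLle hLsum husum
  have htL : ∑' g, L g = (1 - ε) * (∑' g : G, -(f g * Real.log (f g))) - ε := by
    simp only [hLdef]
    rw [Summable.tsum_sub (hHf.neg.mul_left (1 - ε)) (hps.mul_left ε), tsum_mul_left, tsum_mul_left,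
      hp1, mul_one]
  rw [htL] at hle
  linarith
end
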